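/- arXiv:2407.17608 — 5 statements merged into one kernel-verified Lean document; each statement's English description precedes it below -/
import Mathlib

section
/- Biane's inequality: for any π ∈ S_n and the full cycle γ_n = (1,2,…,n), one has #(π) + #(π⁻¹γ_n) ≤ n + 1. -/
/-- The setoid on `α` whose classes are the cycles of the permutation `π`. -/
def cycleSetoid {α : Type*} (π : Equiv.Perm α) : Setoid α :=
  ⟨π.SameCycle, ⟨fun x => Equiv.Perm.SameCycle.refl π x,
    fun h => h.symm, fun h1 h2 => h1.trans h2⟩⟩

/-- The number of cycles (including fixed points) of a permutation. -/
noncomputable def numCycles {α : Type*} (π : Equiv.Perm α) : ℕ :=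
  Nat.card (Quotient (cycleSetoid π))

/-!
Write `#σ` for the number of cycles. Multiplying by a transposition changes `#σ` by at most one,
and for `σ a ≠ a` the product `swap a (σ a) * σ` splits `a` off its cycle, so it has one cycle
more. Induction on `card α - #σ` then gives the subadditivity `#σ + #τ ≤ card α + #(σ * τ)` of
the Cayley distance `card α - #σ`. Apply it to `σ = π`, `τ = π⁻¹ γ_n`, and use that `γ_n` has at
most one cycle.
-/

open Equiv Equiv.Perm

namespace Setoid

variable {α : Type*}

theorem rel_swap_apply [DecidableEq α] {r : Setoid α} {a b : α} (hab : r a b) (x : α) :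
    r x (swap a b x) := by
  rw [swap_apply_def]
  split_ifs with hxa hxb
  · exact hxa ▸ hab
  · exact hxb ▸ r.symm hab
  · exact r.refl x

theorem map_of_le_surjective {s t : Setoid α} (h : s ≤ t) : Function.Surjective (map_of_le h) :=
  Quotient.ind fun x => ⟨⟦x⟧, rfl⟩

variable [Finite α] {s t : Setoid α}

theorem card_quotient_le_of_le (h : s ≤ t) : Nat.card (Quotient t) ≤ Nat.card (Quotient s) :=
  Nat.card_le_card_of_surjective _ (map_of_le_surjective h)

theorem card_quotient_lt_of_le (h : s ≤ t) {a b : α} (hab : t a b) (hn : ¬ s a b) :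
    Nat.card (Quotient t) < Nat.card (Quotient s) := by
  refine (card_quotient_le_of_le h).lt_of_ne fun hcard => hn ?_
  have hinj := ((Nat.bijective_iff_surjective_and_card _).2
    ⟨map_of_le_surjective h, hcard.symm⟩).injective
  exact Quotient.exact (@hinj ⟦a⟧ ⟦b⟧ (Quotient.sound hab))

end Setoid

theorem Nat.card_le_ncard_add_one_of_compl_singleton_subset {β : Type*} [Finite β] {s : Set β}
    {b : β} (hs : {b}ᶜ ⊆ s) : Nat.card β ≤ s.ncard + 1 :=
  calc Nat.card β = (Set.univ : Set β).ncard := (Set.ncard_univ β).symm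
    _ ≤ (insert b s).ncard :=
      Set.ncard_le_ncard fun y _ => (em (y = b)).elim Or.inl (Or.inr ∘ @hs y)
    _ ≤ s.ncard + 1 := Set.ncard_insert_le b s

section

variable {α : Type*}

theorem cycleSetoid_le_of_forall_rel {σ : Perm α} {r : Setoid α} (h : ∀ x, r x (σ x)) :
    cycleSetoid σ ≤ r := by
  have hinv : ∀ y, r y (σ⁻¹ y) := fun y => r.symm (by simpa using h (σ⁻¹ y))
  rintro x _ ⟨i, rfl⟩
  induction i using Int.induction_on with
  | zero => exact r.refl x
  | succ i ih => rw [add_comm, zpow_one_add, mul_apply]; exact r.trans ih (h _)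
  | pred i ih => rw [sub_eq_neg_add, zpow_add, zpow_neg_one, mul_apply]; exact r.trans ih (hinv _)

theorem cycleSetoid_swap_mul_le [DecidableEq α] {σ : Perm α} {r : Setoid α} {a b : α}
    (hσ : cycleSetoid σ ≤ r) (hab : r a b) : cycleSetoid (swap a b * σ) ≤ r :=
  cycleSetoid_le_of_forall_rel fun x =>
    r.trans (hσ ⟨1, by simp⟩) (Setoid.rel_swap_apply hab (σ x))

theorem numCycles_one : numCycles (1 : Perm α) = Nat.card α := by
  have : cycleSetoid (1 : Perm α) = ⊥ := Setoid.ext fun _ _ => sameCycle_one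
  rw [numCycles, this]
  exact Nat.card_congr Setoid.quotientBotEquiv

variable [Finite α]

theorem numCycles_le_card (σ : Perm α) : numCycles σ ≤ Nat.card α :=
  Nat.card_le_card_of_surjective _ Quotient.mk_surjective

theorem numCycles_lt_numCycles_swap_mul [DecidableEq α] {σ : Perm α} {a : α} (ha : σ a ≠ a) :
    numCycles σ < numCycles (swap a (σ a) * σ) := by
  refine Setoid.card_quotient_lt_of_le (a := a) (b := σ a)
    (cycleSetoid_swap_mul_le le_rfl ⟨1, rfl⟩) ⟨1, rfl⟩ ?_
  -- `a` is a fixed point of `swap a (σ a) * σ`, cut off from the rest of its `σ`-cycle.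
  intro h
  exact ha (h.eq_of_left (by simp [Function.IsFixedPt])).symm

theorem numCycles_le_numCycles_swap_mul_add_one [DecidableEq α] (σ : Perm α) (a b : α) :
    numCycles σ ≤ numCycles (swap a b * σ) + 1 := by
  classical
  -- Labelling the cycles of `σ` with those of `a` and `b` identified gives a labelling that is
  -- constant on the cycles of `swap a b * σ` and misses at most one label.
  let merge : Quotient (cycleSetoid σ) → Quotient (cycleSetoid σ) := Function.update id ⟦b⟧ ⟦a⟧
  have hle : cycleSetoid (swap a b * σ) ≤ Setoid.ker (merge ∘ Quotient.mk _) :=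
    cycleSetoid_swap_mul_le (fun x y h => congrArg merge (Quotient.sound h))
      (by by_cases hab : (⟦a⟧ : Quotient (cycleSetoid σ)) = ⟦b⟧ <;> simp [merge, hab])
  calc numCycles σ ≤ (Set.range merge).ncard + 1 :=
        Nat.card_le_ncard_add_one_of_compl_singleton_subset (b := ⟦b⟧) fun y hy =>
          ⟨y, by simp_all [merge]⟩
    _ = Nat.card (Quotient (Setoid.ker (merge ∘ Quotient.mk _))) + 1 := by
        rw [Nat.card_congr (Setoid.quotientKerEquivRange _), Quotient.mk_surjective.range_comp,
          Nat.card_coe_set_eq]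
    _ ≤ numCycles (swap a b * σ) + 1 := by
        gcongr
        exact Setoid.card_quotient_le_of_le hle

theorem numCycles_add_numCycles_le (σ τ : Perm α) :
    numCycles σ + numCycles τ ≤ Nat.card α + numCycles (σ * τ) := by
  classical
  by_cases hσ : σ = 1
  · simp [hσ, numCycles_one]
  obtain ⟨a, ha⟩ : ∃ a, σ a ≠ a := by
    by_contra! h
    exact hσ (Equiv.ext h)
  have hsplit := numCycles_lt_numCycles_swap_mul ha
  have hmerge := numCycles_le_numCycles_swap_mul_add_one (swap a (σ a) * σ * τ) a (σ a)
  rw [← mul_assoc, ← mul_assoc, swap_mul_self, one_mul] at hmerge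
  have hbound := numCycles_le_card (swap a (σ a) * σ)
  have ih := numCycles_add_numCycles_le (swap a (σ a) * σ) τ
  omega
termination_by Nat.card α - numCycles σ

end

theorem numCycles_finRotate_le_one (n : ℕ) : numCycles (finRotate n) ≤ 1 := by
  rcases lt_or_ge n 2 with hn | hn
  · exact (numCycles_le_card _).trans (by rw [Nat.card_fin]; omega)
  rw [numCycles, Finite.card_le_one_iff_subsingleton]
  have hmoved : ∀ x, finRotate n x ≠ x := fun x =>
    mem_support.1 (by simp [support_finRotate_of_le hn])
  refine ⟨Quotient.ind₂ fun x y => Quotient.sound ?_⟩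
  exact (isCycle_finRotate_of_le hn).sameCycle (hmoved x) (hmoved y)

/-- Biane's inequality: for any `π ∈ S_n` and the full cycle
`γ_n = (1,2,…,n)`, one has `#(π) + #(π⁻¹ γ_n) ≤ n + 1`. -/
theorem biane_inequality {n : ℕ} (π : Equiv.Perm (Fin n)) :
    numCycles π + numCycles (π⁻¹ * finRotate n) ≤ n + 1 :=
  calc numCycles π + numCycles (π⁻¹ * finRotate n)
      ≤ Nat.card (Fin n) + numCycles (π * (π⁻¹ * finRotate n)) := numCycles_add_numCycles_le _ _
    _ = n + numCycles (finRotate n) := by rw [mul_inv_cancel_left, Nat.card_fin]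
    _ ≤ n + 1 := Nat.add_le_add_left (numCycles_finRotate_le_one n) n
end

section
/- For partitioned permutations, the length |(V,π)| = 2|V| − |π| satisfies the triangle inequality: given partitioned permutations (V,π) and (U,σ) on {1,…,n} (with π ≤ V and σ ≤ U), one has |(V∨U, πσ)| ≤ |(V,π)| + |(U,σ)|. -/
/-- The length `|V| = n - #(V)` of a set partition, as an integer. -/
noncomputable def setoidLen {α : Type*} (s : Setoid α) : ℤ :=
  (Nat.card α : ℤ) - (Nat.card (Quotient s) : ℤ)

/-- The length `|π| = n - #(π)` of a permutation, as an integer. -/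
noncomputable def permLenZ {α : Type*} (π : Equiv.Perm α) : ℤ :=
  (Nat.card α : ℤ) - (numCycles π : ℤ)

/-!
For `U = cyc σ`, the partition into cycles of `σ`, build `σ` from the identity by multiplying at
each step by a transposition `(a b)` that merges two cycles. This raises `|σ|` by one, while
`2|V ∨ cyc σ| − |πσ|` grows by at most one: joining `a` and `b` merges at most two blocks, and when
it does, `a` and `b` lie in different cycles of `πσ` (as `cyc (πσ) ≤ V ∨ cyc σ`), which the
transposition then merges as well. A general `U ≥ cyc σ` is reached by merging blocks pairwise,
using `|V ∨ U| − |V ∨ X| ≤ |U| − |X|` for `X ≤ U`: each merge raises `|X|` by one and `|V ∨ X|` by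
at most one.
-/

section

open Equiv

variable {α : Type*}

theorem setoidLen_cycleSetoid (π : Perm α) : setoidLen (cycleSetoid π) = permLenZ π := rfl

theorem Setoid.map_of_le_surjective_s6 {s t : Setoid α} (h : s ≤ t) :
    Function.Surjective (Setoid.map_of_le h) :=
  Quotient.ind fun x => ⟨⟦x⟧, rfl⟩

theorem cycleSetoid_le_iff {f : Perm α} {s : Setoid α} :
    cycleSetoid f ≤ s ↔ ∀ x, s x (f x) := by
  refine ⟨fun h x => h ⟨1, by simp⟩, fun h => ?_⟩
  rintro x _ ⟨i, rfl⟩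
  induction i using Int.induction_on with
  | zero => exact s.refl' x
  | succ i ih =>
    rw [add_comm, zpow_add, zpow_one, Perm.mul_apply]
    exact s.trans' ih (h _)
  | pred i ih =>
    rw [sub_eq_neg_add, zpow_add, zpow_neg_one, Perm.mul_apply]
    set y := (f ^ (-(i : ℤ))) x
    have h' := h (f⁻¹ y)
    rw [show f (f⁻¹ y) = y from f.apply_symm_apply y] at h'
    exact s.trans' ih (s.symm' h')

theorem cycleSetoid_mul_le (f g : Perm α) :
    cycleSetoid (f * g) ≤ cycleSetoid f ⊔ cycleSetoid g :=
  cycleSetoid_le_iff.2 fun x =>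
    (cycleSetoid f ⊔ cycleSetoid g).trans'
      (le_sup_right (a := cycleSetoid f) (⟨1, by simp⟩ : g.SameCycle x (g x)))
      (le_sup_left (b := cycleSetoid g) (⟨1, by simp⟩ : f.SameCycle (g x) (f (g x))))

theorem cycleSetoid_swap_le_iff [DecidableEq α] {a b : α} {s : Setoid α} :
    cycleSetoid (swap a b) ≤ s ↔ s a b := by
  rw [cycleSetoid_le_iff]
  refine ⟨fun h => by simpa using h a, fun h x => ?_⟩
  rcases eq_or_ne x a with rfl | hxa
  · rw [swap_apply_left]
    exact h
  rcases eq_or_ne x b with rfl | hxb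
  · rw [swap_apply_right]
    exact s.symm' h
  rw [swap_apply_of_ne_of_ne hxa hxb]

theorem sup_cycleSetoid_swap_of_rel [DecidableEq α] {s : Setoid α} {a b : α} (h : s a b) :
    s ⊔ cycleSetoid (swap a b) = s :=
  sup_eq_left.2 (cycleSetoid_swap_le_iff.2 h)

theorem Equiv.Perm.sameCycle_mul_swap_of_not_sameCycle [Finite α] [DecidableEq α]
    {π : Perm α} {a b : α} (h : ¬π.SameCycle a b) : (π * swap a b).SameCycle a b := by
  set ρ := π * swap a b
  -- `ρ` follows the `π`-orbit of `a`, entered at `b`, until it returns to `a`.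
  have orbit : ∀ k : ℕ, ρ.SameCycle b a ∨ ρ.SameCycle b ((π ^ (k + 1)) a) := by
    intro k
    induction k with
    | zero => exact Or.inr ⟨1, by simp [ρ]⟩
    | succ k ih =>
      refine ih.elim Or.inl fun hk => ?_
      by_cases ha : (π ^ (k + 1)) a = a
      · exact Or.inl (ha ▸ hk)
      have hb : (π ^ (k + 1)) a ≠ b := fun hb => h ⟨k + 1, by exact_mod_cast hb⟩
      have hρ : ρ ((π ^ (k + 1)) a) = (π ^ (k + 1 + 1)) a := by
        rw [Perm.mul_apply, swap_apply_of_ne_of_ne ha hb, pow_succ' π (k + 1), Perm.mul_apply]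
      exact Or.inr (hρ ▸ hk.apply_right)
  obtain ⟨m, hm, hπm⟩ := (isOfFinOrder_of_finite π).exists_pow_eq_one
  obtain ⟨k, rfl⟩ := Nat.exists_eq_add_one.2 hm
  rcases orbit k with hba | hba
  · exact hba.symm
  · simpa [hπm] using hba.symm

theorem cycleSetoid_mul_swap_of_not_sameCycle [Finite α] [DecidableEq α] {π : Perm α} {a b : α}
    (h : ¬π.SameCycle a b) :
    cycleSetoid (π * swap a b) = cycleSetoid π ⊔ cycleSetoid (swap a b) := by
  have hswap : cycleSetoid (swap a b) ≤ cycleSetoid (π * swap a b) :=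
    cycleSetoid_swap_le_iff.2 (Perm.sameCycle_mul_swap_of_not_sameCycle h)
  refine le_antisymm (cycleSetoid_mul_le _ _) (sup_le ?_ hswap)
  calc cycleSetoid π = cycleSetoid (π * swap a b * swap a b) := by rw [mul_swap_mul_self]
    _ ≤ cycleSetoid (π * swap a b) ⊔ cycleSetoid (swap a b) := cycleSetoid_mul_le _ _
    _ = cycleSetoid (π * swap a b) := sup_eq_left.2 hswap

theorem Equiv.Perm.exists_mul_swap_eq_of_ne_one [DecidableEq α] {σ : Perm α} (hσ : σ ≠ 1) :
    ∃ (τ : Perm α) (a b : α), ¬τ.SameCycle a b ∧ τ * swap a b = σ := by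
  obtain ⟨a, ha⟩ : ∃ a, σ a ≠ a := by
    by_contra! h
    exact hσ (Equiv.ext h)
  refine ⟨σ * swap a (σ a), a, σ a, fun h => ha (h.eq_of_right ?_).symm, mul_swap_mul_self _ _ _⟩
  simp [Function.IsFixedPt]

section Counting

variable [Finite α]

theorem setoidLen_nonneg (s : Setoid α) : 0 ≤ setoidLen s := by
  have := Nat.card_le_card_of_surjective _ (Quotient.mk_surjective (s := s))
  unfold setoidLen
  omega

theorem permLenZ_nonneg (π : Perm α) : 0 ≤ permLenZ π :=
  setoidLen_nonneg (cycleSetoid π)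

theorem card_quotient_le_of_le {s t : Setoid α} (h : s ≤ t) :
    Nat.card (Quotient t) ≤ Nat.card (Quotient s) :=
  Nat.card_le_card_of_surjective _ (Setoid.map_of_le_surjective_s6 h)

theorem setoidLen_mono {s t : Setoid α} (h : s ≤ t) : setoidLen s ≤ setoidLen t := by
  have := card_quotient_le_of_le h
  unfold setoidLen
  omega

variable [DecidableEq α]

theorem setoidLen_sup_cycleSetoid_swap_le (s : Setoid α) (a b : α) :
    setoidLen (s ⊔ cycleSetoid (swap a b)) ≤ setoidLen s + 1 := by
  classical
  -- The join identifies no two `s`-classes except those of `a` and `b`, as `φ` witnesses.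
  let φ : α → Quotient s := fun x => if s x b then ⟦a⟧ else ⟦x⟧
  have htφ : s ⊔ cycleSetoid (swap a b) ≤ Setoid.ker φ := by
    refine sup_le (fun x y hxy => ?_) (cycleSetoid_swap_le_iff.2 ?_)
    · have hb : s x b ↔ s y b := ⟨s.trans' (s.symm' hxy), s.trans' hxy⟩
      simp only [Setoid.ker_def, φ, hb]
      split_ifs
      · rfl
      · exact Quotient.sound hxy
    · simp [Setoid.ker_def, φ]
  have hinj : Set.InjOn (Setoid.map_of_le (le_sup_left : s ≤ s ⊔ cycleSetoid (swap a b)))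
      {⟦b⟧}ᶜ := by
    intro qx hx qy hy hxy
    obtain ⟨x, rfl⟩ := Quotient.mk_surjective qx
    obtain ⟨y, rfl⟩ := Quotient.mk_surjective qy
    have hφ : φ x = φ y := htφ (Quotient.exact hxy)
    have hxb : ¬ s x b := fun h => hx (Quotient.sound h)
    have hyb : ¬ s y b := fun h => hy (Quotient.sound h)
    simpa [φ, hxb, hyb] using hφ
  have hcard := hinj.ncard_image.symm.trans_le (Set.ncard_le_card _)
  have hcompl := Set.ncard_compl_add_ncard ({⟦b⟧} : Set (Quotient s))
  rw [Set.ncard_singleton] at hcompl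
  unfold setoidLen
  omega

theorem setoidLen_sup_cycleSetoid_swap_of_not_rel {s : Setoid α} {a b : α} (h : ¬ s a b) :
    setoidLen (s ⊔ cycleSetoid (swap a b)) = setoidLen s + 1 := by
  have hle : s ≤ s ⊔ cycleSetoid (swap a b) := le_sup_left
  have hlt : Nat.card (Quotient (s ⊔ cycleSetoid (swap a b))) < Nat.card (Quotient s) := by
    refine (card_quotient_le_of_le hle).lt_of_ne fun heq => h ?_
    have hbij := (Setoid.map_of_le_surjective_s6 hle).bijective_of_nat_card_le heq.ge
    have hab : (s ⊔ cycleSetoid (swap a b)) a b :=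
      le_sup_right (a := s) (⟨1, by simp⟩ : (swap a b).SameCycle a b)
    exact Quotient.exact (hbij.injective (Quotient.sound hab))
  have := setoidLen_sup_cycleSetoid_swap_le s a b
  unfold setoidLen at this ⊢
  omega

theorem permLenZ_mul_swap_of_not_sameCycle {π : Perm α} {a b : α} (h : ¬π.SameCycle a b) :
    permLenZ (π * swap a b) = permLenZ π + 1 := by
  rw [← setoidLen_cycleSetoid, cycleSetoid_mul_swap_of_not_sameCycle h]
  exact setoidLen_sup_cycleSetoid_swap_of_not_rel h

theorem permLenZ_le_mul_swap_add_one (π : Perm α) (a b : α) :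
    permLenZ π ≤ permLenZ (π * swap a b) + 1 :=
  calc permLenZ π = setoidLen (cycleSetoid (π * swap a b * swap a b)) := by
        rw [mul_swap_mul_self, setoidLen_cycleSetoid]
    _ ≤ setoidLen (cycleSetoid (π * swap a b) ⊔ cycleSetoid (swap a b)) :=
        setoidLen_mono (cycleSetoid_mul_le _ _)
    _ ≤ permLenZ (π * swap a b) + 1 := setoidLen_sup_cycleSetoid_swap_le _ a b

end Counting

section Triangle

variable [Finite α] [DecidableEq α]

theorem partitionedPerm_triangle_swap {W : Setoid α} {ρ : Perm α} (hρW : cycleSetoid ρ ≤ W)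
    (a b : α) :
    2 * setoidLen (W ⊔ cycleSetoid (swap a b)) - permLenZ (ρ * swap a b) ≤
      2 * setoidLen W - permLenZ ρ + 1 := by
  by_cases hab : W a b
  · have := permLenZ_le_mul_swap_add_one ρ a b
    rw [sup_cycleSetoid_swap_of_rel hab]
    omega
  · have hρ : ¬ρ.SameCycle a b := fun h => hab (hρW h)
    rw [setoidLen_sup_cycleSetoid_swap_of_not_rel hab, permLenZ_mul_swap_of_not_sameCycle hρ]
    omega

theorem Equiv.Perm.merge_induction_on {P : Perm α → Prop} (σ : Perm α) (one : P 1)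
    (merge : ∀ (τ : Perm α) (a b : α), ¬τ.SameCycle a b → P τ → P (τ * swap a b)) : P σ := by
  induction hk : (permLenZ σ).toNat using Nat.strong_induction_on generalizing σ with
  | _ k ih =>
    by_cases hσ : σ = 1
    · exact hσ ▸ one
    obtain ⟨τ, a, b, hab, rfl⟩ := exists_mul_swap_eq_of_ne_one hσ
    have hτ := permLenZ_mul_swap_of_not_sameCycle hab
    have := permLenZ_nonneg τ
    exact merge τ a b hab (ih _ (by omega) τ rfl)

theorem partitionedPerm_triangle_cycleSetoid (V : Setoid α) {π : Perm α}
    (hπV : cycleSetoid π ≤ V) (σ : Perm α) :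
    2 * setoidLen (V ⊔ cycleSetoid σ) - permLenZ (π * σ) ≤
      2 * setoidLen V - permLenZ π + permLenZ σ := by
  induction σ using Equiv.Perm.merge_induction_on with
  | one =>
    have := permLenZ_nonneg (1 : Perm α)
    rw [sup_eq_left.2 (cycleSetoid_le_iff.2 fun x => V.refl' x), mul_one]
    omega
  | merge τ a b hab ih =>
    have hπτ : cycleSetoid (π * τ) ≤ V ⊔ cycleSetoid τ :=
      (cycleSetoid_mul_le π τ).trans (sup_le_sup_right hπV _)
    have hswap := partitionedPerm_triangle_swap hπτ a b
    rw [cycleSetoid_mul_swap_of_not_sameCycle hab, ← sup_assoc, ← mul_assoc,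
      permLenZ_mul_swap_of_not_sameCycle hab]
    omega

theorem setoidLen_sup_sub_setoidLen_sup_le (V : Setoid α) {X Y : Setoid α} (hXY : X ≤ Y) :
    setoidLen (V ⊔ Y) - setoidLen (V ⊔ X) ≤ setoidLen Y - setoidLen X := by
  induction hk : (setoidLen Y - setoidLen X).toNat using Nat.strong_induction_on
    generalizing X with
  | _ k ih =>
    by_cases hYX : Y ≤ X
    · rw [le_antisymm hXY hYX]
      omega
    obtain ⟨a, b, hYab, hXab⟩ : ∃ a b, Y a b ∧ ¬ X a b := by
      by_contra! h
      exact hYX fun x y => h x y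
    have hX'Y : X ⊔ cycleSetoid (swap a b) ≤ Y := sup_le hXY (cycleSetoid_swap_le_iff.2 hYab)
    have hX' := setoidLen_sup_cycleSetoid_swap_of_not_rel hXab
    have hVX' := setoidLen_sup_cycleSetoid_swap_le (V ⊔ X) a b
    have := setoidLen_mono hX'Y
    rw [sup_assoc] at hVX'
    have := ih _ (by omega) hX'Y rfl
    omega

end Triangle

end

/-- Triangle inequality for partitioned permutations: if `(V,π)` and `(U,σ)`
are partitioned permutations on `{1,…,n}` (each cycle of `π` is contained in a
block of `V`, and likewise for `σ` and `U`), then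
`|(V∨U, πσ)| ≤ |(V,π)| + |(U,σ)|` where `|(V,π)| = 2|V| − |π|`. -/
theorem partitionedPerm_triangle {n : ℕ} (V U : Setoid (Fin n))
    (π σ : Equiv.Perm (Fin n))
    (hπV : cycleSetoid π ≤ V) (hσU : cycleSetoid σ ≤ U) :
    2 * setoidLen (V ⊔ U) - permLenZ (π * σ) ≤
      (2 * setoidLen V - permLenZ π) + (2 * setoidLen U - permLenZ σ) := by
  have hcycles := partitionedPerm_triangle_cycleSetoid V hπV σ
  have hcoarsen := setoidLen_sup_sub_setoidLen_sup_le V hσU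
  rw [setoidLen_cycleSetoid] at hcoarsen
  omega
end

section
/- Let G be a labelled oriented graph with elementarization Ḡ and let (τ,∼) be an oriented partition of the edges of Ḡ such that every loop of Ḡ forms a singleton block of τ. If the bipartite graph G(τ) — with white vertices the connected components of G, black vertices the blocks of τ, and one edge for each edge of Ḡ joining its component to its block — is a tree, then the induced vertex partition satisfies #(τ∼) = |V| − 2(c − 1), where c is the number of connected components of G. -/
/-- Two oriented edges are elementarily equivalent when they connect the same
(unordered) pair of vertices. -/
def sameEnds {V E : Type*} (src trg : E → V) (e e' : E) : Prop :=
  ({src e, trg e} : Set V) = {src e', trg e'}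

/-- The setoid on the edges whose classes are the edges of the
elementarization `Ḡ`. -/
def sameEndsSetoid {V E : Type*} (src trg : E → V) : Setoid E :=
  ⟨sameEnds src trg, ⟨fun _ => rfl, fun h => h.symm, fun h1 h2 => h1.trans h2⟩⟩

/-- An oriented partition of the edges of (the elementarization of) the
labelled oriented graph with edge-endpoint maps `src`, `trg`: a partition
`rel` of the edges whose blocks are unions of elementarization classes,
together with, for each block, an identification of its edges determined by a
choice of orientation `ori` of each elementary edge. -/
structure OrientedEdgePartition {V E : Type*} (src trg : E → V) where
  /-- the partition of the (elementarized) edges -/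
  rel : Setoid E
  sameEnds_le : ∀ e e', sameEnds src trg e e' → rel e e'
  /-- chosen orientation of each elementary edge -/
  ori : E → V × V
  ori_spec : ∀ e, ori e = (src e, trg e) ∨ ori e = (trg e, src e)
  ori_const : ∀ e e', sameEnds src trg e e' → ori e = ori e'

/-- The vertex partition induced by an oriented partition of the edges:
the equivalence generated by identifying, for any two edges in the same
block, their first endpoints and their second endpoints (in the chosen
orientations). -/
def OrientedEdgePartition.vertexSetoid {V E : Type*} {src trg : E → V}
    (P : OrientedEdgePartition src trg) : Setoid V :=
  Relation.EqvGen.setoid (fun u v => ∃ e e', P.rel e e' ∧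
    ((u = (P.ori e).1 ∧ v = (P.ori e').1) ∨ (u = (P.ori e).2 ∧ v = (P.ori e').2)))

/-- The setoid on the vertices whose classes are the connected components of
the graph. -/
def compSetoid {V E : Type*} (src trg : E → V) : Setoid V :=
  Relation.EqvGen.setoid (fun u v => ∃ e, u = src e ∧ v = trg e)

/-- The connected component of (the endpoints of) an elementarized edge. -/
def edgeComp {V E : Type*} (src trg : E → V) :
    Quotient (sameEndsSetoid src trg) → Quotient (compSetoid src trg) :=
  Quotient.lift (fun e => Quotient.mk (compSetoid src trg) (src e)) (by
    intro e e' (h : sameEnds src trg e e')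
    have h1 : src e' ∈ ({src e, trg e} : Set V) := by
      rw [h]; exact Set.mem_insert _ _
    rcases h1 with h1 | h1
    · show Quotient.mk _ (src e) = Quotient.mk _ (src e')
      rw [h1]
    · exact Quotient.sound (by
        rw [h1]
        exact Relation.EqvGen.rel _ _ ⟨e, rfl, rfl⟩))

/-- The block of an elementarized edge under an oriented partition of the
edges. -/
def edgeBlock {V E : Type*} {src trg : E → V}
    (P : OrientedEdgePartition src trg) :
    Quotient (sameEndsSetoid src trg) → Quotient P.rel :=
  Quotient.lift (fun e => Quotient.mk P.rel e)
    (fun e e' h => Quotient.sound (P.sameEnds_le e e' h))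

/-- The bipartite multigraph with white vertices `α`, black vertices `β`
and one edge for each element of `ε`, with endpoints `f e` and `g e`;
recorded as a simple graph for connectivity purposes. -/
def bipGraph {α β ε : Type*} (f : ε → α) (g : ε → β) : SimpleGraph (α ⊕ β) where
  Adj x y := ∃ e, (x = Sum.inl (f e) ∧ y = Sum.inr (g e)) ∨
    (y = Sum.inl (f e) ∧ x = Sum.inr (g e))
  symm := by
    constructor
    rintro x y ⟨e, h | h⟩
    · exact ⟨e, Or.inr h⟩
    · exact ⟨e, Or.inl h⟩
  loopless := by
    constructor
    rintro x ⟨e, ⟨h1, h2⟩ | ⟨h1, h2⟩⟩ <;> subst h1 <;> simp at h2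

/-- The bipartite multigraph with edge set `ε` and endpoint maps `f`, `g` is a
tree: connected, and the number of vertices exceeds the number of edges by 1. -/
def isTreeBip {α β ε : Type*} (f : ε → α) (g : ε → β) : Prop :=
  (bipGraph f g).Connected ∧ Nat.card (α ⊕ β) = Nat.card ε + 1

/-!
As `G(τ)` is a tree, `#τ = |Ē| - (c - 1)`, so it suffices to show `#(τ∼) = |V| - 2 (|Ē| - #τ)`
whenever every edge of `G(τ)` is a bridge. We induct on `|Ē| - #τ`. If a block contains two
elementary edges `e₁, e₂`, split the class of `e₁` off into a block of its own; the bridge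
condition is inherited. In the split partition every identification of vertices follows a path
of `G(τ)` avoiding `ē₁`, so no vertex on the side of the bridge `ē₁` containing `e₁` is
identified with one on the side containing `e₂`. Merging the blocks back identifies the first
endpoints and the second endpoints of `e₁` and `e₂`; together with the invariant that `∼` never
identifies two distinct vertices of one component, this lowers the number of classes by exactly
two.
-/

namespace Setoid

variable {α : Type*}

def addPair (t : Setoid α) (p q : α) : Setoid α :=
  Relation.EqvGen.setoid fun u v => t u v ∨ (u = p ∧ v = q)

variable (t : Setoid α) (p q : α)

lemma le_addPair : t ≤ t.addPair p q := fun _ _ h => Relation.EqvGen.rel _ _ (Or.inl h)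

lemma addPair_rel : t.addPair p q p q := Relation.EqvGen.rel _ _ (Or.inr ⟨rfl, rfl⟩)

lemma addPair_le {s : Setoid α} (hts : t ≤ s) (hpq : s p q) : t.addPair p q ≤ s :=
  eqvGen_le fun _ _ h => h.elim (hts ·) fun ⟨hu, hv⟩ => hu ▸ hv ▸ hpq

lemma addPair_iff {x y : α} :
    t.addPair p q x y ↔ t x y ∨ (t x p ∧ t q y) ∨ (t x q ∧ t p y) := by
  let s : Setoid α :=
    { r := fun x y => t x y ∨ (t x p ∧ t q y) ∨ (t x q ∧ t p y)
      iseqv := ⟨fun x => Or.inl (t.refl' x), by grind [Setoid.symm'],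
        by grind [Setoid.symm', Setoid.trans']⟩ }
  refine ⟨fun h => addPair_le t p q (s := s) (fun _ _ => Or.inl)
    (Or.inr (Or.inl ⟨t.refl' p, t.refl' q⟩)) h, ?_⟩
  have hpq := addPair_rel t p q
  have hle := le_addPair t p q
  set T := t.addPair p q
  rintro (h | ⟨h₁, h₂⟩ | ⟨h₁, h₂⟩)
  · exact hle h
  · exact T.trans' (hle h₁) (T.trans' hpq (hle h₂))
  · exact T.trans' (hle h₁) (T.trans' (T.symm' hpq) (hle h₂))

lemma card_quotient_addPair [Finite α] (hpq : ¬ t p q) :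
    Nat.card (Quotient t) = Nat.card (Quotient (t.addPair p q)) + 1 := by
  classical
  let π : {x : Quotient t // x ≠ ⟦q⟧} → Quotient (t.addPair p q) :=
    fun x => Quotient.map' id (le_addPair t p q) x.1
  have hπ : Function.Bijective π := by
    constructor
    · rintro ⟨x, hx⟩ ⟨y, hy⟩ hxy
      induction x using Quotient.inductionOn with | h a => ?_
      induction y using Quotient.inductionOn with | h b => ?_
      have ha : ¬ t a q := fun h => hx (Quotient.sound h)
      have hb : ¬ t b q := fun h => hy (Quotient.sound h)
      have := (addPair_iff t p q).1 (Quotient.exact hxy)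
      exact Subtype.ext (Quotient.sound (show t a b by grind [Setoid.symm']))
    · intro y
      induction y using Quotient.inductionOn with | h b => ?_
      by_cases hb : t b q
      · refine ⟨⟨⟦p⟧, fun h => hpq (Quotient.exact h)⟩, Quotient.sound ?_⟩
        exact (addPair_iff t p q).2 (Or.inr (Or.inl ⟨t.refl' p, t.symm' hb⟩))
      · exact ⟨⟨⟦b⟧, fun h => hb (Quotient.exact h)⟩, rfl⟩
  rw [← Nat.card_eq_of_bijective π hπ, ← Finite.card_option,
    Nat.card_congr (Equiv.optionSubtypeNe _)]

section Gluing

variable {C : Type*} (t : Setoid α) (κ : α → C) (σ : C → Prop) {a₁ b₁ a₂ b₂ : α}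

lemma rel_of_addPair_of_sides (hσ : ∀ u v, t u v → (σ (κ u) ↔ σ (κ v)))
    (hσ₁ : σ (κ a₁)) (hσ₂ : ¬ σ (κ a₂)) {x y : α} (h : t.addPair a₁ a₂ x y) :
    t x y ∨ (σ (κ x) ∧ ¬ σ (κ y) ∧ t x a₁ ∧ t a₂ y) ∨
      (¬ σ (κ x) ∧ σ (κ y) ∧ t y a₁ ∧ t a₂ x) := by
  rcases (addPair_iff t a₁ a₂).1 h with h | ⟨hx, hy⟩ | ⟨hx, hy⟩
  · exact Or.inl h
  · exact Or.inr (Or.inl ⟨(hσ _ _ hx).2 hσ₁, fun h => hσ₂ ((hσ _ _ hy).2 h), hx, hy⟩)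
  · exact Or.inr (Or.inr ⟨fun h => hσ₂ ((hσ _ _ hx).1 h), (hσ _ _ hy).1 hσ₁, t.symm' hy,
      t.symm' hx⟩)

lemma card_quotient_addPair_addPair [Finite α] (hσ : ∀ u v, t u v → (σ (κ u) ↔ σ (κ v)))
    (hinj : ∀ u v, t u v → κ u = κ v → u = v) (h₁ : κ a₁ = κ b₁) (h₂ : κ a₂ = κ b₂)
    (hab₁ : a₁ ≠ b₁) (hσ₁ : σ (κ a₁)) (hσ₂ : ¬ σ (κ a₂)) :
    Nat.card (Quotient t) = Nat.card (Quotient ((t.addPair a₁ a₂).addPair b₁ b₂)) + 2 := by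
  have hsep : ¬ t.addPair a₁ a₂ b₁ b₂ := by
    intro h
    rcases rel_of_addPair_of_sides t κ σ hσ hσ₁ hσ₂ h with h | ⟨-, -, h, -⟩ | ⟨h, -⟩
    · exact hσ₂ (h₂ ▸ (hσ _ _ h).1 (h₁ ▸ hσ₁))
    · exact hab₁ (hinj _ _ h h₁.symm).symm
    · exact h (h₁ ▸ hσ₁)
  rw [card_quotient_addPair t a₁ a₂ fun h => hσ₂ ((hσ _ _ h).1 hσ₁),
    card_quotient_addPair _ b₁ b₂ hsep]

lemma eq_of_addPair_addPair (hσ : ∀ u v, t u v → (σ (κ u) ↔ σ (κ v)))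
    (hinj : ∀ u v, t u v → κ u = κ v → u = v) (h₁ : κ a₁ = κ b₁) (h₂ : κ a₂ = κ b₂)
    (hab₁ : a₁ ≠ b₁) (hab₂ : a₂ ≠ b₂) (hσ₁ : σ (κ a₁)) (hσ₂ : ¬ σ (κ a₂)) {u v : α}
    (huv : (t.addPair a₁ a₂).addPair b₁ b₂ u v) (hκ : κ u = κ v) : u = v := by
  have hside₁ : ∀ x, t.addPair a₁ a₂ x b₁ → σ (κ x) := by
    intro x hx
    rcases rel_of_addPair_of_sides t κ σ hσ hσ₁ hσ₂ hx with h | ⟨h, -⟩ | ⟨-, -, h, -⟩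
    · exact (hσ _ _ h).2 (h₁ ▸ hσ₁)
    · exact h
    · exact absurd (hinj _ _ h h₁.symm) hab₁.symm
  have hside₂ : ∀ y, t.addPair a₁ a₂ b₂ y → ¬ σ (κ y) := by
    intro y hy
    rcases rel_of_addPair_of_sides t κ σ hσ hσ₁ hσ₂ hy with h | ⟨h, -⟩ | ⟨-, -, -, h⟩
    · exact fun hy => hσ₂ (h₂ ▸ (hσ _ _ h).2 hy)
    · exact absurd h (h₂ ▸ hσ₂)
    · exact absurd (hinj _ _ h h₂) hab₂
  rcases (addPair_iff _ b₁ b₂).1 huv with h | ⟨hu, hv⟩ | ⟨hu, hv⟩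
  · rcases rel_of_addPair_of_sides t κ σ hσ hσ₁ hσ₂ h with h | ⟨hu, hv, -⟩ | ⟨hu, hv, -⟩
    · exact hinj _ _ h hκ
    · exact absurd (hκ ▸ hu) hv
    · exact absurd (hκ ▸ hv) hu
  · exact absurd (hκ ▸ hside₁ u hu) (hside₂ v hv)
  · exact absurd (hκ ▸ hside₁ v (Setoid.symm' _ hv)) (hside₂ u (Setoid.symm' _ hu))

end Gluing

end Setoid

theorem SimpleGraph.Reachable.lift {V W : Type*} {G : SimpleGraph V} {G' : SimpleGraph W}
    (φ : V → W) (hφ : ∀ x y, G.Adj x y → G'.Reachable (φ x) (φ y)) {x y : V}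
    (h : G.Reachable x y) : G'.Reachable (φ x) (φ y) := by
  rw [SimpleGraph.reachable_iff_reflTransGen] at h ⊢
  exact Relation.ReflTransGen.lift' φ
    (fun a b hab => (G'.reachable_iff_reflTransGen _ _).1 (hφ a b hab)) _ _ h

section Bipartite

variable {α β ε : Type*} (f : ε → α) (g : ε → β)

lemma bipGraph_adj (e : ε) : (bipGraph f g).Adj (.inl (f e)) (.inr (g e)) :=
  ⟨e, .inl ⟨rfl, rfl⟩⟩

lemma bipGraph_reachable_of_eq {e e' : ε} (h : g e = g e') :
    (bipGraph f g).Reachable (.inl (f e)) (.inl (f e')) :=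
  (bipGraph_adj f g e).reachable.trans (h ▸ (bipGraph_adj f g e').reachable.symm)

lemma card_edgeSet_bipGraph_le [Finite ε] : Nat.card (bipGraph f g).edgeSet ≤ Nat.card ε := by
  refine Nat.card_le_card_of_surjective
    (fun e => ⟨s(.inl (f e), .inr (g e)), bipGraph_adj f g e⟩) ?_
  rintro ⟨x, hx⟩
  induction x using Sym2.ind with | h x y => ?_
  obtain ⟨e, ⟨hx, hy⟩ | ⟨hy, hx⟩⟩ := hx <;> simp only at hx hy <;> subst hx hy
  · exact ⟨e, rfl⟩
  · exact ⟨e, Subtype.ext Sym2.eq_swap⟩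

abbrev bipGraphDel (e₀ : ε) : SimpleGraph (α ⊕ β) :=
  bipGraph (fun e : {e // e ≠ e₀} => f e) (fun e => g e)

def isForestBip : Prop :=
  ∀ e₀, ¬ (bipGraphDel f g e₀).Reachable (.inl (f e₀)) (.inr (g e₀))

variable {f g}

theorem isTreeBip.isForestBip [Finite α] [Finite β] [Finite ε] (h : isTreeBip f g) :
    isForestBip f g := by
  obtain ⟨hconn, hcount⟩ := h
  intro e₀ hreach
  have hconn₀ : (bipGraphDel f g e₀).Connected := by
    refine @SimpleGraph.Connected.mk _ _ (fun x y => ?_) ⟨.inl (f e₀)⟩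
    refine (hconn.preconnected x y).lift id fun x y hxy => ?_
    obtain ⟨e, hxy⟩ := hxy
    by_cases he : e = e₀
    · subst he
      rcases hxy with ⟨rfl, rfl⟩ | ⟨rfl, rfl⟩
      exacts [hreach, hreach.symm]
    · exact SimpleGraph.Adj.reachable ⟨⟨e, he⟩, hxy⟩
  have hcard := hconn₀.card_vert_le_card_edgeSet_add_one.trans
    (Nat.add_le_add_right (card_edgeSet_bipGraph_le _ _) 1)
  classical
  rw [← Nat.card_congr (Equiv.optionSubtypeNe e₀), Finite.card_option] at hcount
  omega

theorem isForestBip.of_comp {β' : Type*} {g' : ε → β'} (φ : β' → β)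
    (hφ : ∀ e, φ (g' e) = g e) (h : isForestBip f g) : isForestBip f g' := by
  intro e₀ hreach
  have := hreach.lift (G' := bipGraphDel f g e₀) (Sum.map id φ) fun x y hxy => by
    obtain ⟨e, hxy⟩ := hxy
    refine SimpleGraph.Adj.reachable ⟨e, ?_⟩
    rcases hxy with ⟨rfl, rfl⟩ | ⟨rfl, rfl⟩ <;> simp [hφ]
  exact h e₀ (by simpa [hφ] using this)

end Bipartite

section Partition

variable {V E : Type*} {src trg : E → V}

lemma mk_trg_eq_mk_src (e : E) :
    Quotient.mk (compSetoid src trg) (trg e) = Quotient.mk _ (src e) :=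
  Quotient.sound (Relation.EqvGen.symm _ _ (Relation.EqvGen.rel _ _ ⟨e, rfl, rfl⟩))

@[simp]
lemma edgeComp_mk (e : E) :
    edgeComp src trg (Quotient.mk _ e) = Quotient.mk (compSetoid src trg) (src e) := rfl

namespace OrientedEdgePartition

variable (P : OrientedEdgePartition src trg)

lemma mk_ori_fst (e : E) :
    Quotient.mk (compSetoid src trg) (P.ori e).1 = Quotient.mk _ (src e) := by
  rcases P.ori_spec e with h | h <;> simp [h, mk_trg_eq_mk_src]

lemma mk_ori_snd (e : E) :
    Quotient.mk (compSetoid src trg) (P.ori e).2 = Quotient.mk _ (src e) := by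
  rcases P.ori_spec e with h | h <;> simp [h, mk_trg_eq_mk_src]

lemma ori_fst_ne_snd {e : E} (he : src e ≠ trg e) : (P.ori e).1 ≠ (P.ori e).2 := by
  rcases P.ori_spec e with h | h <;> simp [h, he, Ne.symm he]

lemma vertexSetoid_ori {e e' : E} (h : P.rel e e') :
    P.vertexSetoid (P.ori e).1 (P.ori e').1 ∧ P.vertexSetoid (P.ori e).2 (P.ori e').2 :=
  ⟨Relation.EqvGen.rel _ _ ⟨e, e', h, .inl ⟨rfl, rfl⟩⟩,
    Relation.EqvGen.rel _ _ ⟨e, e', h, .inr ⟨rfl, rfl⟩⟩⟩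

lemma eq_of_vertexSetoid_of_rel_sameEnds (hP : ∀ e e', P.rel e e' → sameEnds src trg e e')
    {u v : V} (huv : P.vertexSetoid u v) : u = v := by
  refine Setoid.eqvGen_le (s := ⊥) ?_ huv
  rintro _ _ ⟨e, e', h, ⟨rfl, rfl⟩ | ⟨rfl, rfl⟩⟩ <;> simp [P.ori_const e e' (hP e e' h)]

/-- `P.split e₁` splits the elementary edge of `e₁` off its block. -/
def split (e₁ : E) : OrientedEdgePartition src trg where
  rel :=
    { r := fun e e' => P.rel e e' ∧ (sameEnds src trg e e₁ ↔ sameEnds src trg e' e₁)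
      iseqv := ⟨fun e => ⟨P.rel.refl' e, .rfl⟩, fun h => ⟨P.rel.symm' h.1, h.2.symm⟩,
        fun h h' => ⟨P.rel.trans' h.1 h'.1, h.2.trans h'.2⟩⟩ }
  sameEnds_le e e' h := ⟨P.sameEnds_le e e' h, ⟨h.symm.trans, h.trans⟩⟩
  ori := P.ori
  ori_spec := P.ori_spec
  ori_const := P.ori_const

lemma rel_eq_addPair_split {e₁ e₂ : E} (h : P.rel e₁ e₂) (hne : ¬ sameEnds src trg e₂ e₁) :
    P.rel = (P.split e₁).rel.addPair e₁ e₂ := by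
  refine le_antisymm (fun e e' hee' => (Setoid.addPair_iff _ _ _).2 ?_) ?_
  · have hrel : ∀ {x}, sameEnds src trg x e₁ → P.rel x e₁ := P.sameEnds_le _ _
    have hrel₂ : ∀ {x}, sameEnds src trg x e₁ → P.rel e₂ x :=
      fun hx => P.rel.trans' (P.rel.symm' h) (P.rel.symm' (hrel hx))
    by_cases he : sameEnds src trg e e₁ <;> by_cases he' : sameEnds src trg e' e₁
    · exact .inl ⟨hee', iff_of_true he he'⟩
    · refine .inr (.inl ⟨⟨hrel he, iff_of_true he rfl⟩, ?_, iff_of_false hne he'⟩)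
      exact P.rel.trans' (hrel₂ he) hee'
    · refine .inr (.inr ⟨⟨?_, iff_of_false he hne⟩, P.rel.symm' (hrel he'),
        iff_of_true rfl he'⟩)
      exact P.rel.symm' (P.rel.trans' (hrel₂ he') (P.rel.symm' hee'))
    · exact .inl ⟨hee', iff_of_false he he'⟩
  · exact Setoid.addPair_le _ _ _ (fun _ _ h => h.1) h

lemma vertexSetoid_eq_addPair {Q : OrientedEdgePartition src trg} (hori : Q.ori = P.ori)
    {e₁ e₂ : E} (hrel : Q.rel = P.rel.addPair e₁ e₂) :
    Q.vertexSetoid = (P.vertexSetoid.addPair (P.ori e₁).1 (P.ori e₂).1).addPair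
      (P.ori e₁).2 (P.ori e₂).2 := by
  set T := (P.vertexSetoid.addPair (P.ori e₁).1 (P.ori e₂).1).addPair (P.ori e₁).2 (P.ori e₂).2
  have hPT : P.vertexSetoid ≤ T := (Setoid.le_addPair _ _ _).trans (Setoid.le_addPair _ _ _)
  have h₁ : T (P.ori e₁).1 (P.ori e₂).1 := Setoid.le_addPair _ _ _ (Setoid.addPair_rel _ _ _)
  have h₂ : T (P.ori e₁).2 (P.ori e₂).2 := Setoid.addPair_rel _ _ _
  have hQ : Q.rel e₁ e₂ := hrel ▸ Setoid.addPair_rel _ _ _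
  refine le_antisymm (Setoid.eqvGen_le ?_) (Setoid.addPair_le _ _ _
    (Setoid.addPair_le _ _ _ (Setoid.eqvGen_le ?_) (hori ▸ (Q.vertexSetoid_ori hQ).1))
    (hori ▸ (Q.vertexSetoid_ori hQ).2))
  · rintro _ _ ⟨e, e', hee', hends⟩
    rw [hori] at hends
    rw [hrel, Setoid.addPair_iff] at hee'
    rcases hee' with h | ⟨h, h'⟩ | ⟨h, h'⟩ <;> rcases hends with ⟨rfl, rfl⟩ | ⟨rfl, rfl⟩
    · exact hPT (P.vertexSetoid_ori h).1
    · exact hPT (P.vertexSetoid_ori h).2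
    · exact T.trans' (hPT (P.vertexSetoid_ori h).1) (T.trans' h₁ (hPT (P.vertexSetoid_ori h').1))
    · exact T.trans' (hPT (P.vertexSetoid_ori h).2) (T.trans' h₂ (hPT (P.vertexSetoid_ori h').2))
    · exact T.trans' (hPT (P.vertexSetoid_ori h).1)
        (T.trans' (T.symm' h₁) (hPT (P.vertexSetoid_ori h').1))
    · exact T.trans' (hPT (P.vertexSetoid_ori h).2)
        (T.trans' (T.symm' h₂) (hPT (P.vertexSetoid_ori h').2))
  · rintro _ _ ⟨e, e', hee', hends⟩
    exact Relation.EqvGen.rel _ _ ⟨e, e', hrel ▸ Setoid.le_addPair _ _ _ hee', hori ▸ hends⟩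

lemma reachable_of_split_vertexSetoid (e₁ : E) {u v : V} (h : (P.split e₁).vertexSetoid u v) :
    (bipGraphDel (edgeComp src trg) (edgeBlock P) (Quotient.mk _ e₁)).Reachable
      (.inl (Quotient.mk _ u)) (.inl (Quotient.mk _ v)) := by
  refine Setoid.eqvGen_le (s := (SimpleGraph.reachableSetoid _).comap
    fun u => (Sum.inl (Quotient.mk (compSetoid src trg) u) :
      Quotient (compSetoid src trg) ⊕ Quotient P.rel)) ?_ h
  rintro _ _ ⟨e, e', ⟨hee', hiff⟩, hends⟩
  dsimp only [split] at hends
  rw [Setoid.comap_rel]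
  change SimpleGraph.Reachable _ _ _
  by_cases he : sameEnds src trg e e₁
  · have hori : P.ori e = P.ori e' := (P.ori_const _ _ he).trans (P.ori_const _ _ (hiff.1 he)).symm
    rcases hends with ⟨rfl, rfl⟩ | ⟨rfl, rfl⟩ <;> rw [hori]
  · have hne : Quotient.mk (sameEndsSetoid src trg) e ≠ Quotient.mk _ e₁ :=
      fun h => he (Quotient.exact h)
    have hne' : Quotient.mk (sameEndsSetoid src trg) e' ≠ Quotient.mk _ e₁ :=
      fun h => he (hiff.2 (Quotient.exact h))
    have := bipGraph_reachable_of_eq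
      (fun e : {e // e ≠ Quotient.mk (sameEndsSetoid src trg) e₁} => edgeComp src trg e)
      (fun e => edgeBlock P e) (e := ⟨_, hne⟩) (e' := ⟨_, hne'⟩) (Quotient.sound hee')
    rcases hends with ⟨rfl, rfl⟩ | ⟨rfl, rfl⟩ <;> simpa [mk_ori_fst, mk_ori_snd] using this

end OrientedEdgePartition

end Partition

namespace OrientedEdgePartition

variable {V E : Type*} {src trg : E → V} (P : OrientedEdgePartition src trg)

def SeparatesComponents : Prop :=
  ∀ u v, P.vertexSetoid u v → Quotient.mk (compSetoid src trg) u = Quotient.mk _ v → u = v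

lemma card_vertexSetoid_split_and_separatesComponents [Finite V]
    (hforest : isForestBip (edgeComp src trg) (edgeBlock P)) {e₁ e₂ : E} (h₁₂ : P.rel e₁ e₂)
    (hne : ¬ sameEnds src trg e₂ e₁) (hst₁ : src e₁ ≠ trg e₁) (hst₂ : src e₂ ≠ trg e₂)
    (hsep : (P.split e₁).SeparatesComponents) :
    Nat.card (Quotient (P.split e₁).vertexSetoid) = Nat.card (Quotient P.vertexSetoid) + 2 ∧
      P.SeparatesComponents := by
  set P' := P.split e₁
  -- `σ c`: in `G(τ)` the component `c` lies on the same side of the bridge `ē₁` as `e₁`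
  let σ (c : Quotient (compSetoid src trg)) : Prop :=
    (bipGraphDel (edgeComp src trg) (edgeBlock P) (Quotient.mk _ e₁)).Reachable
      (.inl (Quotient.mk _ (src e₁))) (.inl c)
  have hσ : ∀ u v, P'.vertexSetoid u v → (σ (Quotient.mk _ u) ↔ σ (Quotient.mk _ v)) :=
    fun u v h => ⟨fun hu => hu.trans (P.reachable_of_split_vertexSetoid e₁ h),
      fun hv => hv.trans (P.reachable_of_split_vertexSetoid e₁ h).symm⟩
  have hσ₁ : σ (Quotient.mk _ (P'.ori e₁).1) := by
    rw [P'.mk_ori_fst]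
  have hσ₂ : ¬ σ (Quotient.mk _ (P'.ori e₂).1) := by
    rw [P'.mk_ori_fst]
    intro h
    have hne : Quotient.mk (sameEndsSetoid src trg) e₂ ≠ Quotient.mk _ e₁ :=
      fun h => hne (Quotient.exact h)
    refine hforest (Quotient.mk _ e₁) (h.trans (SimpleGraph.Adj.reachable ?_))
    exact ⟨⟨_, hne⟩, .inl ⟨rfl, congrArg Sum.inr (Quotient.sound h₁₂)⟩⟩
  have hends (e : E) :
      Quotient.mk (compSetoid src trg) (P'.ori e).1 = Quotient.mk _ (P'.ori e).2 := by
    rw [P'.mk_ori_fst, P'.mk_ori_snd]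
  have hvs := P'.vertexSetoid_eq_addPair (Q := P) rfl (P.rel_eq_addPair_split h₁₂ hne)
  refine ⟨hvs ▸ Setoid.card_quotient_addPair_addPair _ _ σ hσ hsep (hends e₁) (hends e₂)
    (P'.ori_fst_ne_snd hst₁) hσ₁ hσ₂, fun u v huv => ?_⟩
  exact Setoid.eq_of_addPair_addPair _ _ σ hσ hsep (hends e₁) (hends e₂)
    (P'.ori_fst_ne_snd hst₁) (P'.ori_fst_ne_snd hst₂) hσ₁ hσ₂ (hvs ▸ huv)

end OrientedEdgePartition

theorem OrientedEdgePartition.card_vertexSetoid_add_and_separatesComponents {V E : Type*}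
    [Finite V] [Finite E] {src trg : E → V} (P : OrientedEdgePartition src trg)
    (hloop : ∀ e e', src e = trg e → P.rel e e' → sameEnds src trg e e')
    (hforest : isForestBip (edgeComp src trg) (edgeBlock P)) :
    Nat.card (Quotient P.vertexSetoid) + 2 * Nat.card (Quotient (sameEndsSetoid src trg)) =
        Nat.card V + 2 * Nat.card (Quotient P.rel) ∧ P.SeparatesComponents := by
  by_cases hP : ∀ e e', P.rel e e' → sameEnds src trg e e'
  · have hrel : P.rel = sameEndsSetoid src trg :=
      Setoid.ext fun e e' => ⟨hP e e', P.sameEnds_le e e'⟩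
    have hV : Nat.card (Quotient P.vertexSetoid) = Nat.card V :=
      (Nat.card_eq_of_bijective _ ⟨fun u v h => P.eq_of_vertexSetoid_of_rel_sameEnds hP
        (Quotient.exact h), Quotient.mk_surjective⟩).symm
    exact ⟨by rw [hV, hrel], fun u v huv _ => P.eq_of_vertexSetoid_of_rel_sameEnds hP huv⟩
  push Not at hP
  obtain ⟨e₁, e₂, h₁₂, hne⟩ := hP
  have hne₂₁ : ¬ sameEnds src trg e₂ e₁ := fun h => hne h.symm
  have hcardE : Nat.card (Quotient (P.split e₁).rel) = Nat.card (Quotient P.rel) + 1 := by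
    rw [P.rel_eq_addPair_split h₁₂ hne₂₁]
    exact Setoid.card_quotient_addPair _ _ _ fun h => hne₂₁ (h.2.1 rfl)
  have hforest' : isForestBip (edgeComp src trg) (edgeBlock (P.split e₁)) :=
    hforest.of_comp (Quotient.map' id fun _ _ h => h.1) (Quotient.ind fun _ => rfl)
  obtain ⟨hcard, hsep⟩ := card_vertexSetoid_add_and_separatesComponents (P.split e₁)
    (fun e e' he h => hloop e e' he h.1) hforest'
  obtain ⟨hcardV, hsep'⟩ := P.card_vertexSetoid_split_and_separatesComponents hforest h₁₂ hne₂₁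
    (fun h => hne (hloop _ _ h h₁₂)) (fun h => hne₂₁ (hloop _ _ h (P.rel.symm' h₁₂))) hsep
  exact ⟨by omega, hsep'⟩
termination_by Nat.card E - Nat.card (Quotient P.rel)
decreasing_by
  have := Nat.card_le_card_of_surjective _ (Quotient.mk_surjective (s := (P.split e₁).rel))
  omega

/-- Let `(τ,∼)` be an oriented partition of the edges of a labelled oriented
graph `G` such that every loop of the elementarization `Ḡ` forms a singleton
block of `τ`.  If the bipartite graph `G(τ)` — white vertices the connected
components of `G`, black vertices the blocks of `τ`, one edge for each edge
of `Ḡ` — is a tree, then the induced vertex partition satisfies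
`#(τ∼) = |V| − 2(c − 1)`, where `c` is the number of connected components
of `G`. -/
theorem vertexSetoid_card_of_tree {V E : Type*} [Fintype V] [Fintype E]
    (src trg : E → V) (P : OrientedEdgePartition src trg)
    (hloop : ∀ e e', src e = trg e → P.rel e e' → sameEnds src trg e e')
    (htree : isTreeBip (edgeComp src trg) (edgeBlock P)) :
    (Nat.card (Quotient P.vertexSetoid) : ℤ) =
      (Fintype.card V : ℤ) -
        2 * ((Nat.card (Quotient (compSetoid src trg)) : ℤ) - 1) := by
  obtain ⟨hcard, -⟩ := P.card_vertexSetoid_add_and_separatesComponents hloop htree.isForestBip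
  have hcount := htree.2
  rw [Nat.card_sum] at hcount
  rw [Nat.card_eq_fintype_card (α := V)] at hcard
  omega
end

section
/- Let γ ∈ S_m with cycles of lengths m_1,…,m_r, σ ∈ P_2(m) a pairing, and π a partition of {1,…,m}. If for every block {u,v} of σ the edges e_u^π = ([γ(u)]_π,[u]_π) and e_v^π = ([γ(v)]_π,[v]_π) connect the same pair of blocks of π with opposite orientations, then every cycle of the permutation γσ is contained in a block of π (γσ ≤ π). -/
/-- The index set of the `(m 0, …, m (r-1))`-annulus. -/
def annIndex (r : ℕ) (m : Fin r → ℕ) : Type := Σ i : Fin r, Fin (m i)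

/-- The permutation `γ_{m_1,…,m_r}` whose cycles are the `r` discrete circles
of sizes `m 0, …, m (r-1)`. -/
def gammaAnn (r : ℕ) (m : Fin r → ℕ) : Equiv.Perm (annIndex r m) :=
  Equiv.sigmaCongrRight fun i => finRotate (m i)

/-!
The hypothesis `[u]_π = [γ(σ u)]_π` says exactly that every point lies in the same block of `π`
as its image under `γσ`. A partition that contains each step of a permutation contains its
whole orbits, so every cycle of `γσ` lies in a block of `π`.
-/

open Equiv

theorem Setoid.rel_zpow_apply_of_forall_rel_apply {α : Type*} (s : Setoid α) {f : Perm α}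
    (hf : ∀ x, s x (f x)) (n : ℤ) (x : α) : s x ((f ^ n) x) := by
  refine zpow_induction_left (P := fun g : Perm α => ∀ x, s x (g x)) s.refl ?_ ?_ n x
  · exact fun g hg x => s.trans (hg x) (hf (g x))
  · intro g hg x
    refine s.trans (hg x) (s.symm ?_)
    simpa only [Perm.mul_apply, Perm.coe_inv, apply_symm_apply] using hf (f⁻¹ (g x))

theorem Setoid.rel_of_sameCycle {α : Type*} (s : Setoid α) {f : Perm α}
    (hf : ∀ x, s x (f x)) {x y : α} (h : f.SameCycle x y) : s x y := by
  obtain ⟨n, rfl⟩ := h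
  exact s.rel_zpow_apply_of_forall_rel_apply hf n x

theorem gammaSigma_le_of_opposite_orientation_general (r : ℕ) (m : Fin r → ℕ)
    (σ : Equiv.Perm (annIndex r m)) (π : Setoid (annIndex r m))
    (hopp : ∀ u : annIndex r m,
      π u (gammaAnn r m (σ u)) ∧ π (σ u) (gammaAnn r m u)) :
    ∀ x y : annIndex r m, (gammaAnn r m * σ).SameCycle x y → π x y :=
  fun _ _ => π.rel_of_sameCycle fun u => (hopp u).1

/-- Let `γ` be the permutation with cycles of lengths `m_1,…,m_r`, let `σ` be
a pairing (fixed-point-free involution), and let `π` be a partition of the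
ground set.  If for every block `{u,v}` of `σ` the edges
`e_u = ([γ(u)],[u])` and `e_v = ([γ(v)],[v])` connect the same pair of blocks
of `π` with opposite orientations (`[u] = [γ(v)]` and `[v] = [γ(u)]`), then
every cycle of `γσ` is contained in a block of `π`, i.e. `γσ ≤ π`. -/
theorem gammaSigma_le_of_opposite_orientation (r : ℕ) (m : Fin r → ℕ)
    (σ : Equiv.Perm (annIndex r m)) (π : Setoid (annIndex r m))
    (hfix : ∀ x, σ x ≠ x) (hinv : σ * σ = 1)
    (hopp : ∀ u : annIndex r m,
      π u (gammaAnn r m (σ u)) ∧ π (σ u) (gammaAnn r m u)) :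
    ∀ x y : annIndex r m, (gammaAnn r m * σ).SameCycle x y → π x y :=
  gammaSigma_le_of_opposite_orientation_general r m σ π hopp
end

section
/- Let σ ∈ NC_2(m_1,…,m_r) and let (a,b),(c,d) be through strings of σ such that, in the quotient graph of T by the cycles of γσ, the edges e_a and e_c connect the same ordered pair of distinct vertices (same orientation). Define σ^switch = σ·(a,b)(c,d)(a,d)(b,c), replacing the pairs {a,b},{c,d} by {a,d},{b,c}. Then: (i) γ ∨ σ^switch has exactly two blocks A and B, with {a,d} ⊆ A and {b,c} ⊆ B; (ii) the restrictions σ^switch|_A and σ^switch|_B are non-crossing pairings relative to γ|_A and γ|_B respectively; (iii) the cycle partition of γσ restricted to A equals that of γ|_A σ^switch|_A, and similarly for B. -/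
instance (r : ℕ) (m : Fin r → ℕ) : DecidableEq (annIndex r m) := by
  unfold annIndex; infer_instance

namespace Setoid

variable {α : Type*}

/-- The join of `R` with the relation identifying `u` and `v`. -/
noncomputable def pairJoin (R : Setoid α) (u v : α) : Setoid α := by
  classical exact ker fun x => if R x v then Quotient.mk R u else Quotient.mk R x

theorem pairJoin_iff {R : Setoid α} {u v x y : α} :
    pairJoin R u v x y ↔ R x y ∨ (R x u ∨ R x v) ∧ (R y u ∨ R y v) := by
  classical
  unfold pairJoin; rw [ker_def]
  have hs : ∀ {a b}, R a b → R b a := R.symm'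
  have ht : ∀ {a b c}, R a b → R b c → R a c := R.trans'
  split_ifs with hx hy hy <;> simp only [Quotient.eq] <;> grind

theorem le_pairJoin (R : Setoid α) (u v : α) : R ≤ pairJoin R u v :=
  fun _ _ h => pairJoin_iff.2 (Or.inl h)

theorem pairJoin_of_rel {R : Setoid α} {u v x y : α} (hx : R x u ∨ R x v) (hy : R y u ∨ R y v) :
    pairJoin R u v x y :=
  pairJoin_iff.2 (Or.inr ⟨hx, hy⟩)

theorem pairJoin_le {R : Setoid α} {u v : α} (h : R u v) : pairJoin R u v ≤ R := by
  intro x y hxy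
  rcases pairJoin_iff.1 hxy with hxy | ⟨hx | hx, hy | hy⟩
  · exact hxy
  · exact R.trans' hx (R.symm' hy)
  · exact R.trans' hx (R.trans' h (R.symm' hy))
  · exact R.trans' hx (R.trans' (R.symm' h) (R.symm' hy))
  · exact R.trans' hx (R.symm' hy)

theorem rel_iff_not_rel_of_pairJoin_eq_top {R : Setoid α} {u v : α} (h : R.pairJoin u v = ⊤)
    (huv : ¬R u v) (x : α) : R x v ↔ ¬R x u := by
  refine ⟨fun hxv hxu => huv (R.trans' (R.symm' hxu) hxv), fun hxu => ?_⟩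
  have hxu' : R.pairJoin u v x u := by rw [h]; trivial
  rcases pairJoin_iff.1 hxu' with hxu' | ⟨hx | hx, -⟩
  exacts [absurd hxu' hxu, absurd hx hxu, hx]

variable [Finite α]

theorem card_quotient_le_of_le_s16 {R T : Setoid α} (h : R ≤ T) :
    Nat.card (Quotient T) ≤ Nat.card (Quotient R) :=
  Nat.card_le_card_of_surjective (map_of_le h) (Quotient.ind fun x => ⟨⟦x⟧, rfl⟩)

theorem card_quotient_lt_of_le_s16 {R T : Setoid α} (h : R ≤ T) {x y : α} (hT : T x y)
    (hR : ¬R x y) : Nat.card (Quotient T) < Nat.card (Quotient R) := by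
  have := Fintype.ofFinite (Quotient R)
  have := Fintype.ofFinite (Quotient T)
  simp only [Nat.card_eq_fintype_card]
  refine Fintype.card_lt_of_surjective_not_injective (map_of_le h)
    (Quotient.ind fun x => ⟨⟦x⟧, rfl⟩) fun hinj => hR (Quotient.exact (hinj ?_))
  exact Quotient.sound hT

theorem card_quotient_le_card_pairJoin_add_one (R : Setoid α) (u v : α) :
    Nat.card (Quotient R) ≤ Nat.card (Quotient (pairJoin R u v)) + 1 := by
  classical
  let ψ : Quotient R → Option (Quotient (pairJoin R u v)) :=
    Quotient.lift (fun z => if R z v then none else some ⟦z⟧) fun x y hxy => by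
      have hv : R x v ↔ R y v := ⟨R.trans' (R.symm' hxy), R.trans' hxy⟩
      simp only [hv]
      split_ifs
      exacts [rfl, congrArg some (Quotient.sound (le_pairJoin R u v hxy))]
  have hψ : Function.Injective ψ := by
    refine Quotient.ind₂ fun x y hxy => Quotient.sound (show R x y from ?_)
    simp only [ψ, Quotient.lift_mk] at hxy
    split_ifs at hxy with hx hy hy
    · exact R.trans' hx (R.symm' hy)
    · rcases pairJoin_iff.1 (Quotient.exact (Option.some_injective _ hxy)) with
        h | ⟨hx' | hx', hy' | hy'⟩
      exacts [h, R.trans' hx' (R.symm' hy'), absurd hy' hy, absurd hx' hx, absurd hx' hx]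
  simpa only [Finite.card_option] using Nat.card_le_card_of_injective ψ hψ

theorem card_quotient_top_le_one : Nat.card (Quotient (⊤ : Setoid α)) ≤ 1 :=
  Finite.card_le_one_iff_subsingleton.2 ⟨Quotient.ind₂ fun _ _ => Quotient.sound trivial⟩

theorem card_quotient_eq_two {R : Setoid α} {u v : α} (h : R.pairJoin u v = ⊤)
    (huv : ¬R u v) : Nat.card (Quotient R) = 2 := by
  have : Nonempty (Quotient (R.pairJoin u v)) := ⟨⟦u⟧⟩
  have hpos := Nat.card_pos (α := Quotient (R.pairJoin u v))
  have hone : Nat.card (Quotient (R.pairJoin u v)) ≤ 1 := h ▸ card_quotient_top_le_one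
  have := card_quotient_lt_of_le_s16 (le_pairJoin R u v)
    (pairJoin_of_rel (Or.inl (R.refl' u)) (Or.inr (R.refl' v))) huv
  have := card_quotient_le_card_pairJoin_add_one R u v
  omega

end Setoid

theorem Equiv.swap_mul_swap_mul_swap_mul_swap {α : Type*} [DecidableEq α] {a b c d : α}
    (hab : a ≠ b) (hac : a ≠ c) (had : a ≠ d) (hbc : b ≠ c) (hbd : b ≠ d) (hcd : c ≠ d) :
    swap a b * swap c d * swap a d * swap b c = swap a c * swap b d := by
  ext x
  simp only [Perm.mul_apply, swap_apply_def]
  split_ifs <;> simp_all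

namespace Equiv.Perm

variable {α : Type*}

theorem SameCycle.induction [Finite α] {π : Perm α} {x : α} {P : α → Prop} (hx : P x)
    (hstep : ∀ z, π.SameCycle x z → P z → P (π z)) {y : α} (h : π.SameCycle x y) : P y := by
  obtain ⟨n, rfl⟩ := h.exists_nat_pow_eq
  clear h
  induction n with
  | zero => exact hx
  | succ n ih => rw [pow_succ', mul_apply]; exact hstep _ (sameCycle_pow_right.2 rfl) ih

theorem sameCycle_apply_self (π : Perm α) (x : α) : π.SameCycle x (π x) :=
  sameCycle_apply_right.2 .rfl

theorem SameCycle.iff_of_invariant [Finite α] {π : Perm α} {p : α → Prop}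
    (hp : ∀ z, p (π z) ↔ p z) {x y : α} (h : π.SameCycle x y) : p x ↔ p y :=
  h.induction (P := fun z => p x ↔ p z) Iff.rfl fun z _ ih => ih.trans (hp z).symm

theorem SameCycle.of_eqOn_cycle [Finite α] {π π' : Perm α} {x y : α}
    (heq : ∀ z, π.SameCycle x z → π z = π' z) (h : π.SameCycle x y) : π'.SameCycle x y :=
  h.induction rfl fun z hz ih => heq z hz ▸ sameCycle_apply_right.2 ih

variable [DecidableEq α]

theorem swap_mul_pow_succ_apply {π : Perm α} {u v : α} {n : ℕ}
    (h : ∀ i, 0 < i → i ≤ n → (π ^ i) u ≠ u ∧ (π ^ i) u ≠ v) :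
    ((swap u v * π) ^ (n + 1)) u = swap u v ((π ^ (n + 1)) u) := by
  induction n with
  | zero => simp [mul_apply]
  | succ n ih =>
    obtain ⟨hu, hv⟩ := h (n + 1) n.succ_pos le_rfl
    rw [pow_succ' (swap u v * π), mul_apply, ih fun i hi hin => h i hi (by omega),
      swap_apply_of_ne_of_ne hu hv, mul_apply, pow_succ' π (n + 1), mul_apply]

variable [Finite α]

theorem sameCycle_swap_mul_of_not_sameCycle {π : Perm α} {u v : α} (h : ¬π.SameCycle u v) :
    (swap u v * π).SameCycle u v := by
  have hper : ∃ k, 0 < k ∧ (π ^ k) u = u :=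
    ⟨orderOf π, orderOf_pos π, by rw [pow_orderOf_eq_one]; rfl⟩
  obtain ⟨k, ⟨hpos, hku⟩, hmin⟩ :
      ∃ k, (0 < k ∧ (π ^ k) u = u) ∧ ∀ j < k, ¬(0 < j ∧ (π ^ j) u = u) :=
    ⟨_, Nat.find_spec hper, fun _ => Nat.find_min hper⟩
  obtain ⟨n, rfl⟩ := Nat.exists_eq_add_one_of_ne_zero hpos.ne'
  refine ⟨(n + 1 : ℕ), ?_⟩
  rw [zpow_natCast, swap_mul_pow_succ_apply fun i hi hin =>
      ⟨fun hu => hmin i (by omega) ⟨hi, hu⟩, fun hv => h ⟨i, by simpa using hv⟩⟩,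
    hku, swap_apply_left]

theorem not_sameCycle_swap_mul_of_sameCycle {π : Perm α} {u v : α} (huv : u ≠ v)
    (h : π.SameCycle u v) : ¬(swap u v * π).SameCycle u v := by
  have hex : ∃ k, 0 < k ∧ (π ^ k) u = v := by
    obtain ⟨k, hk, -, hkv⟩ := h.exists_pow_eq''
    exact ⟨k, hk, hkv⟩
  -- for the least `k > 0` with `π^k u = v`, the orbit of `u` under `(u v) π` is
  -- `u, π u, …, π^(k-1) u`, which does not contain `v`
  obtain ⟨k, ⟨hpos, hkv⟩, hmin⟩ :
      ∃ k, (0 < k ∧ (π ^ k) u = v) ∧ ∀ j < k, ¬(0 < j ∧ (π ^ j) u = v) :=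
    ⟨_, Nat.find_spec hex, fun _ => Nat.find_min hex⟩
  have hfresh : ∀ i, 0 < i → i < k → (π ^ i) u ≠ u ∧ (π ^ i) u ≠ v := by
    refine fun i hi hik => ⟨fun hu => hmin (k - i) (by omega) ⟨by omega, ?_⟩,
      fun hv => hmin i hik ⟨hi, hv⟩⟩
    rw [← hu, ← mul_apply, ← pow_add, Nat.sub_add_cancel hik.le, hkv]
  obtain ⟨n, rfl⟩ := Nat.exists_eq_add_one_of_ne_zero hpos.ne'
  have hret : ((swap u v * π) ^ (n + 1)) u = u := by
    rw [swap_mul_pow_succ_apply fun i hi hin => hfresh i hi (by omega), hkv, swap_apply_right]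
  rintro hτ
  obtain ⟨N, hN⟩ := hτ.exists_nat_pow_eq
  rw [← Nat.mod_add_div N (n + 1), pow_add, pow_mul, mul_apply,
    pow_apply_eq_self_of_apply_eq_self hret] at hN
  have hr : N % (n + 1) < n + 1 := Nat.mod_lt _ n.succ_pos
  cases hj : N % (n + 1) with
  | zero => exact huv (by simpa [hj] using hN)
  | succ j =>
    obtain ⟨hu, hv⟩ := hfresh (j + 1) j.succ_pos (by omega)
    rw [hj, swap_mul_pow_succ_apply fun i hi hin => hfresh i hi (by omega),
      swap_apply_of_ne_of_ne hu hv] at hN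
    exact hv hN

end Equiv.Perm

open Equiv Equiv.Perm

section Cycles

variable {α : Type*}

theorem numCycles_conj (g f : Perm α) : numCycles (g * f * g⁻¹) = numCycles f :=
  Nat.card_congr (Quotient.congr g⁻¹ fun _ _ => sameCycle_conj)

theorem sameCycle_mul_apply_left_iff {σ γ : Perm α} (hinv : σ * σ = 1) {x y : α} :
    (γ * σ).SameCycle (γ x) y ↔ (γ * σ).SameCycle (σ x) y := by
  rw [← sameCycle_apply_left (f := γ * σ) (x := σ x), mul_apply, ← mul_apply σ σ, hinv,
    one_apply]

theorem rel_apply_iff_of_cycleSetoid_le {π : Perm α} {E : Setoid α} (h : cycleSetoid π ≤ E)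
    {x y : α} : E (π x) y ↔ E x y :=
  ⟨E.trans' (h (sameCycle_apply_self _ _)), E.trans' (E.symm' (h (sameCycle_apply_self _ _)))⟩

variable [Finite α]

theorem cycleSetoid_le_of_forall {π : Perm α} {E : Setoid α} (h : ∀ z, E z (π z)) :
    cycleSetoid π ≤ E :=
  fun x _ hxy => hxy.induction (E.refl' x) fun z _ ih => E.trans' ih (h z)

variable [DecidableEq α]

theorem cycleSetoid_swap_mul_le_pairJoin {π : Perm α} {R : Setoid α} (h : cycleSetoid π ≤ R)
    (u v : α) : cycleSetoid (swap u v * π) ≤ R.pairJoin u v :=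
  cycleSetoid_le_of_forall fun z => by
    have hz : R z (π z) := h (sameCycle_apply_self _ _)
    rw [mul_apply, swap_apply_def]
    split_ifs with hu hv
    · exact Setoid.pairJoin_of_rel (Or.inl (hu ▸ hz)) (Or.inr (R.refl' v))
    · exact Setoid.pairJoin_of_rel (Or.inr (hv ▸ hz)) (Or.inl (R.refl' u))
    · exact Setoid.le_pairJoin R u v hz

theorem cycleSetoid_mul_swap_le {π : Perm α} {R : Setoid α} (h : cycleSetoid π ≤ R) {u v : α}
    (huv : R u v) : cycleSetoid (π * swap u v) ≤ R := by
  have step : ∀ w, R w (π w) := fun w => h (sameCycle_apply_self _ _)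
  rw [mul_swap_eq_swap_mul]
  exact (cycleSetoid_swap_mul_le_pairJoin h _ _).trans
    (Setoid.pairJoin_le (R.trans' (R.symm' (step u)) (R.trans' huv (step v))))

theorem numCycles_swap_mul_of_sameCycle {π : Perm α} {u v : α} (huv : u ≠ v)
    (h : π.SameCycle u v) : numCycles (swap u v * π) = numCycles π + 1 := by
  have hle : cycleSetoid (swap u v * π) ≤ cycleSetoid π :=
    (cycleSetoid_swap_mul_le_pairJoin le_rfl u v).trans (Setoid.pairJoin_le h)
  have hge : cycleSetoid π ≤ (cycleSetoid (swap u v * π)).pairJoin u v := by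
    simpa only [swap_mul_self_mul] using
      cycleSetoid_swap_mul_le_pairJoin (le_refl (cycleSetoid (swap u v * π))) u v
  have hlt := Setoid.card_quotient_lt_of_le_s16 hle h (not_sameCycle_swap_mul_of_sameCycle huv h)
  have := Setoid.card_quotient_le_card_pairJoin_add_one (cycleSetoid (swap u v * π)) u v
  have := Setoid.card_quotient_le_of_le_s16 hge
  unfold numCycles
  omega

theorem numCycles_swap_mul_of_not_sameCycle {π : Perm α} {u v : α} (h : ¬π.SameCycle u v) :
    numCycles (swap u v * π) + 1 = numCycles π := by
  have huv : u ≠ v := by rintro rfl; exact h .rfl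
  simpa only [swap_mul_self_mul] using
    (numCycles_swap_mul_of_sameCycle huv (sameCycle_swap_mul_of_not_sameCycle h)).symm

theorem sup_swap_mul_le (f g : Perm α) (x : α) :
    cycleSetoid (swap (f x) (g x) * f) ⊔ cycleSetoid g ≤ cycleSetoid f ⊔ cycleSetoid g := by
  have hxfg : (cycleSetoid f ⊔ cycleSetoid g) (f x) (g x) :=
    Setoid.trans' _ (Setoid.symm' _ (le_sup_left (α := Setoid α) (sameCycle_apply_self f x)))
      (le_sup_right (α := Setoid α) (sameCycle_apply_self g x))
  exact sup_le ((cycleSetoid_swap_mul_le_pairJoin le_sup_left _ _).trans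
    (Setoid.pairJoin_le hxfg)) le_sup_right

theorem sup_le_pairJoin_sup_swap_mul (f g : Perm α) (x : α) :
    cycleSetoid f ⊔ cycleSetoid g ≤
      (cycleSetoid (swap (f x) (g x) * f) ⊔ cycleSetoid g).pairJoin (f x) (g x) := by
  refine sup_le ?_ (le_sup_right.trans (Setoid.le_pairJoin _ _ _))
  simpa only [swap_mul_self_mul] using
    cycleSetoid_swap_mul_le_pairJoin
      (le_sup_left : cycleSetoid (swap (f x) (g x) * f) ≤ _ ⊔ cycleSetoid g) (f x) (g x)

theorem numCycles_add_add_inv_mul_le (f g : Perm α) :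
    numCycles f + numCycles g + numCycles (f⁻¹ * g) ≤
      Nat.card α + 2 * Nat.card (Quotient (cycleSetoid f ⊔ cycleSetoid g)) := by
  have := Fintype.ofFinite α
  induction hn : (f⁻¹ * g).support.card using Nat.strong_induction_on generalizing f with
  | _ n ih =>
  by_cases hfg : f = g
  · subst hfg
    rw [sup_idem, inv_mul_cancel, numCycles_one]
    unfold numCycles
    omega
  obtain ⟨x, hx⟩ : ∃ x, f x ≠ g x := not_forall.1 fun h => hfg (Equiv.ext h)
  -- `f' = (f x, g x) f` turns `x` into a fixed point of `f'⁻¹ g`, cut off from its cycle under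
  -- `f⁻¹ g`; the number of blocks goes up by at most one, and only if `f'` splits a cycle of `f`
  let f' := swap (f x) (g x) * f
  have hux : (f⁻¹ * g) x ≠ x := fun h => hx (inv_eq_iff_eq.1 h).symm
  have hf'g : f'⁻¹ * g = swap x ((f⁻¹ * g) x) * (f⁻¹ * g) := by
    rw [mul_inv_rev, swap_inv, mul_swap_eq_swap_mul, ← mul_apply f⁻¹ f, inv_mul_cancel,
      one_apply, mul_assoc]
    rfl
  have hcyc : numCycles (f'⁻¹ * g) = numCycles (f⁻¹ * g) + 1 := by
    rw [hf'g]
    exact numCycles_swap_mul_of_sameCycle hux.symm (sameCycle_apply_self _ _)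
  have hih := ih _ (hn ▸ hf'g ▸ card_support_swap_mul hux) f' rfl
  have hK'K : Nat.card (Quotient (cycleSetoid f ⊔ cycleSetoid g)) ≤
      Nat.card (Quotient (cycleSetoid f' ⊔ cycleSetoid g)) :=
    Setoid.card_quotient_le_of_le_s16 (sup_swap_mul_le f g x)
  have hKK' : cycleSetoid f ⊔ cycleSetoid g ≤
      (cycleSetoid f' ⊔ cycleSetoid g).pairJoin (f x) (g x) :=
    sup_le_pairJoin_sup_swap_mul f g x
  by_cases hs : f.SameCycle (f x) (g x)
  · have hf' : numCycles f' = numCycles f + 1 := numCycles_swap_mul_of_sameCycle hx hs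
    have := Setoid.card_quotient_le_card_pairJoin_add_one (cycleSetoid f' ⊔ cycleSetoid g)
      (f x) (g x)
    have := Setoid.card_quotient_le_of_le_s16 hKK'
    omega
  · have hf' : numCycles f' + 1 = numCycles f := numCycles_swap_mul_of_not_sameCycle hs
    have := Setoid.card_quotient_le_of_le_s16 (hKK'.trans (Setoid.pairJoin_le
      (le_sup_left (α := Setoid α) (sameCycle_swap_mul_of_not_sameCycle hs))))
    omega

end Cycles

/-- `σ` is non-crossing relative to `γ` in the sense of `NC(m_1, …, m_r)`. -/
def IsNonCrossing {α : Type*} (σ γ : Perm α) : Prop :=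
  cycleSetoid σ ⊔ cycleSetoid γ = ⊤ ∧
    numCycles σ + numCycles γ + numCycles (σ⁻¹ * γ) = Nat.card α + 2

section Blocks

variable {α : Type*} [Finite α]

theorem numCycles_eq_add_subtypePerm (f : Perm α) {p q : α → Prop} (hp : ∀ x, p (f x) ↔ p x)
    (hq : ∀ x, q (f x) ↔ q x) (hpq : ∀ x, q x ↔ ¬p x) :
    numCycles f = numCycles (f.subtypePerm hp) + numCycles (f.subtypePerm hq) := by
  let e : Quotient (cycleSetoid (f.subtypePerm hp)) ⊕
      Quotient (cycleSetoid (f.subtypePerm hq)) → Quotient (cycleSetoid f) :=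
    Sum.elim (Quotient.map' Subtype.val fun _ _ => sameCycle_subtypePerm.1)
      (Quotient.map' Subtype.val fun _ _ => sameCycle_subtypePerm.1)
  have he : Function.Bijective e := by
    refine ⟨?_, Quotient.ind fun x => ?_⟩
    · rintro (x | x) (y | y) hxy <;> obtain ⟨x, rfl⟩ := Quotient.exists_rep x <;>
        obtain ⟨y, rfl⟩ := Quotient.exists_rep y <;>
        replace hxy : f.SameCycle x y := Quotient.exact hxy
      · exact congrArg Sum.inl (Quotient.sound (sameCycle_subtypePerm.2 hxy))
      · exact absurd ((hxy.iff_of_invariant hp).1 x.2) ((hpq y).1 y.2)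
      · exact absurd ((hxy.iff_of_invariant hp).2 y.2) ((hpq x).1 x.2)
      · exact congrArg Sum.inr (Quotient.sound (sameCycle_subtypePerm.2 hxy))
    · by_cases hx : p x
      exacts [⟨Sum.inl ⟦⟨x, hx⟩⟧, rfl⟩, ⟨Sum.inr ⟦⟨x, (hpq x).2 hx⟩⟧, rfl⟩]
  unfold numCycles
  rw [← Nat.card_sum]
  exact (Nat.card_eq_of_bijective e he).symm

omit [Finite α] in
theorem sameCycle_subtypePerm_mul_iff {f g : Perm α} {p : α → Prop}
    {hf : ∀ x, p (f x) ↔ p x} {hg : ∀ x, p (g x) ↔ p x} {x y : {x // p x}} :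
    (f.subtypePerm hf * g.subtypePerm hg).SameCycle x y ↔ (f * g).SameCycle x y := by
  rw [subtypePerm_mul]
  exact sameCycle_subtypePerm

theorem card_eq_add_card_subtype {p q : α → Prop} (hpq : ∀ x, q x ↔ ¬p x) :
    Nat.card α = Nat.card {x // p x} + Nat.card {x // q x} := by
  classical
  rw [← Nat.card_sum]
  exact Nat.card_congr ((Equiv.sumCompl p).symm.trans
    (sumCongr (Equiv.refl _) (subtypeEquivRight fun x => (hpq x).symm)))

theorem sup_cycleSetoid_subtypePerm_eq_top {f g : Perm α} {p : α → Prop}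
    (hf : ∀ x, p (f x) ↔ p x) (hg : ∀ x, p (g x) ↔ p x)
    (hconn : ∀ x y, p x → p y → (cycleSetoid f ⊔ cycleSetoid g) x y) :
    cycleSetoid (f.subtypePerm hf) ⊔ cycleSetoid (g.subtypePerm hg) = ⊤ := by
  classical
  set S := cycleSetoid (f.subtypePerm hf) ⊔ cycleSetoid (g.subtypePerm hg)
  -- the classes of `S`, extended to `α` by one extra class outside `p`
  let E : Setoid α :=
    Setoid.ker fun z => if hz : p z then some (Quotient.mk S ⟨z, hz⟩) else none
  have hE : ∀ (π : Perm α) (hπ : ∀ x, p (π x) ↔ p x), cycleSetoid (π.subtypePerm hπ) ≤ S →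
      cycleSetoid π ≤ E := fun π hπ hS => cycleSetoid_le_of_forall fun z => by
    by_cases hz : p z
    · simp only [E, Setoid.ker_def, dif_pos hz, dif_pos ((hπ z).2 hz)]
      exact congrArg some
        (Quotient.sound (hS (sameCycle_apply_self (π.subtypePerm hπ) ⟨z, hz⟩)))
    · simp only [E, Setoid.ker_def, dif_neg hz, dif_neg (mt (hπ z).1 hz)]
  refine Setoid.eq_top_iff.2 fun x y => ?_
  have hxy := sup_le (hE f hf le_sup_left) (hE g hg le_sup_right) (hconn x y x.2 y.2)
  simp only [E, Setoid.ker_def, dif_pos x.2, dif_pos y.2, Option.some_inj] at hxy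
  exact Quotient.exact hxy

variable [DecidableEq α]

theorem sup_ne_top_of_card_add_four_le {f g : Perm α}
    (h : Nat.card α + 4 ≤ numCycles f + numCycles g + numCycles (f⁻¹ * g)) :
    cycleSetoid g ⊔ cycleSetoid f ≠ ⊤ := by
  intro htop
  have := numCycles_add_add_inv_mul_le f g
  rw [sup_comm, htop] at this
  have := Setoid.card_quotient_top_le_one (α := α)
  omega

theorem isNonCrossing_subtypePerm_of_card_add_four_le {f g : Perm α} {p q : α → Prop}
    (hfp : ∀ x, p (f x) ↔ p x) (hgp : ∀ x, p (g x) ↔ p x)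
    (hfq : ∀ x, q (f x) ↔ q x) (hgq : ∀ x, q (g x) ↔ q x) (hpq : ∀ x, q x ↔ ¬p x)
    (hconnp : ∀ x y, p x → p y → (cycleSetoid f ⊔ cycleSetoid g) x y)
    (hconnq : ∀ x y, q x → q y → (cycleSetoid f ⊔ cycleSetoid g) x y)
    (h : Nat.card α + 4 ≤ numCycles f + numCycles g + numCycles (f⁻¹ * g)) :
    IsNonCrossing (f.subtypePerm hfp) (g.subtypePerm hgp) ∧
      IsNonCrossing (f.subtypePerm hfq) (g.subtypePerm hgq) := by
  have hinv : ∀ {r : α → Prop}, (∀ x, r (f x) ↔ r x) → (∀ x, r (g x) ↔ r x) →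
      ∀ x, r ((f⁻¹ * g) x) ↔ r x := fun hf hg x => by
    rw [mul_apply, ← hg x, ← hf (f⁻¹ (g x)), ← mul_apply f f⁻¹, mul_inv_cancel, one_apply]
  have htp := sup_cycleSetoid_subtypePerm_eq_top hfp hgp hconnp
  have htq := sup_cycleSetoid_subtypePerm_eq_top hfq hgq hconnq
  have hp := numCycles_add_add_inv_mul_le (f.subtypePerm hfp) (g.subtypePerm hgp)
  have hq := numCycles_add_add_inv_mul_le (f.subtypePerm hfq) (g.subtypePerm hgq)
  rw [htp] at hp
  rw [htq] at hq
  have := Setoid.card_quotient_top_le_one (α := {x // p x})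
  have := Setoid.card_quotient_top_le_one (α := {x // q x})
  have := numCycles_eq_add_subtypePerm f hfp hfq hpq
  have := numCycles_eq_add_subtypePerm g hgp hgq hpq
  have : numCycles (f⁻¹ * g) = numCycles ((f.subtypePerm hfp)⁻¹ * g.subtypePerm hgp) +
      numCycles ((f.subtypePerm hfq)⁻¹ * g.subtypePerm hgq) :=
    numCycles_eq_add_subtypePerm (f⁻¹ * g) (hinv hfp hgp) (hinv hfq hgq) hpq
  have := card_eq_add_card_subtype hpq
  exact ⟨⟨htp, by omega⟩, ⟨htq, by omega⟩⟩

end Blocks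

section CycleSurgery

variable {α : Type*} [Finite α] [DecidableEq α]

/-- Cutting the cycle of `τ` through `a` and `c` at `a` and `c`: the arc from `τ c` to `a`
becomes the cycle of `a`, the arc from `τ a` to `c` the cycle of `c`. -/
theorem sameCycle_of_mul_swap {τ τ' : Perm α} {p : α → Prop} {a c : α}
    (hp : ∀ z, p (τ' z) ↔ p z) (ha : p a) (hc : ¬p c) (hac : τ.SameCycle a c)
    (heq : ∀ z, τ.SameCycle a z → τ' z = (τ * swap a c) z) {x y : α} (hx : τ.SameCycle a x)
    (hxy : τ.SameCycle x y) (hpxy : p x ↔ p y) : τ'.SameCycle x y := by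
  have hτ'a : τ' a = τ c := by rw [heq a .rfl, mul_apply, swap_apply_left]
  have hτ'c : τ' c = τ a := by rw [heq c hac, mul_apply, swap_apply_right]
  have key : ∀ z, τ.SameCycle a z → (p z → τ'.SameCycle a z) ∧ (¬p z → τ'.SameCycle c z) := by
    refine fun z hz => hz.induction
      (P := fun z => (p z → τ'.SameCycle a z) ∧ (¬p z → τ'.SameCycle c z))
      ⟨fun _ => .rfl, fun h => absurd ha h⟩ fun z hz ih => ?_
    by_cases hza : z = a
    · subst hza
      rw [← hτ'c, hp]
      exact ⟨fun h => absurd h hc, fun _ => sameCycle_apply_self τ' c⟩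
    by_cases hzc : z = c
    · subst hzc
      rw [← hτ'a, hp]
      exact ⟨fun _ => sameCycle_apply_self τ' a, fun h => absurd ha h⟩
    rw [show τ z = τ' z by rw [heq z hz, mul_apply, swap_apply_of_ne_of_ne hza hzc], hp,
      sameCycle_apply_right, sameCycle_apply_right]
    exact ih
  have hy := hx.trans hxy
  by_cases hpx : p x
  · exact ((key x hx).1 hpx).symm.trans ((key y hy).1 (hpxy.1 hpx))
  · exact ((key x hx).2 hpx).symm.trans ((key y hy).2 (mt hpxy.2 hpx))

theorem sameCycle_iff_of_mul_swap_mul_swap {τ τ' : Perm α} {p : α → Prop} {a b c d : α}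
    (hp : ∀ z, p (τ' z) ↔ p z) (hτ' : τ' = τ * swap a c * swap b d) (ha : p a) (hb : ¬p b)
    (hc : ¬p c) (hd : p d) (hac : τ.SameCycle a c) (hbd : τ.SameCycle b d)
    (had : ¬τ.SameCycle a d) {x y : α} (hpxy : p x ↔ p y) :
    τ.SameCycle x y ↔ τ'.SameCycle x y := by
  have hoff : ∀ z, ¬τ.SameCycle a z → ¬τ.SameCycle d z → τ' z = τ z := fun z hza hzd => by
    have : z ≠ a ∧ z ≠ c ∧ z ≠ b ∧ z ≠ d := by
      refine ⟨?_, ?_, ?_, ?_⟩ <;> rintro rfl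
      exacts [hza .rfl, hza hac, hzd hbd.symm, hzd .rfl]
    rw [hτ', mul_apply, mul_apply, swap_apply_of_ne_of_ne this.2.2.1 this.2.2.2,
      swap_apply_of_ne_of_ne this.1 this.2.1]
  have hC₁ : ∀ z, τ.SameCycle a z → z ≠ b ∧ z ≠ d := fun z hz =>
    ⟨by rintro rfl; exact had (hz.trans hbd), by rintro rfl; exact had hz⟩
  have hC₂ : ∀ z, τ.SameCycle d z → z ≠ a ∧ z ≠ c := fun z hz =>
    ⟨by rintro rfl; exact had hz.symm, by rintro rfl; exact had (hac.trans hz.symm)⟩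
  refine ⟨fun h => ?_, fun h => ?_⟩
  · by_cases hxa : τ.SameCycle a x
    · refine sameCycle_of_mul_swap hp ha hc hac (fun z hz => ?_) hxa h hpxy
      rw [hτ', mul_apply, swap_apply_of_ne_of_ne (hC₁ z hz).1 (hC₁ z hz).2]
    by_cases hxd : τ.SameCycle d x
    · refine sameCycle_of_mul_swap hp hd hb hbd.symm (fun z hz => ?_) hxd h hpxy
      have hw : τ.SameCycle d (swap b d z) := by
        rw [swap_apply_def]
        split_ifs
        exacts [.rfl, hbd.symm, hz]
      rw [hτ', mul_apply, mul_apply, mul_apply, swap_comm d b,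
        swap_apply_of_ne_of_ne (hC₂ _ hw).1 (hC₂ _ hw).2]
    · refine h.of_eqOn_cycle fun z hz => (hoff z ?_ ?_).symm
      exacts [fun h' => hxa (h'.trans hz.symm), fun h' => hxd (h'.trans hz.symm)]
  · have : cycleSetoid τ' ≤ cycleSetoid τ :=
      hτ' ▸ cycleSetoid_mul_swap_le (cycleSetoid_mul_swap_le le_rfl hac) hbd
    exact this h

end CycleSurgery

section Switch

variable {α : Type*} [DecidableEq α] {σ σ' γ : Perm α} {a c : α}

theorem mul_swap_mul_swap_mul_swap_mul_swap_eq (hinv : σ * σ = 1) (ha : σ a ≠ a)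
    (hc : σ c ≠ c) (hac : a ≠ c) (had : a ≠ σ c) :
    σ * swap a (σ a) * swap c (σ c) * swap a (σ c) * swap (σ a) c =
      σ * swap a c * swap (σ a) (σ c) := by
  have hbc : σ a ≠ c := fun h => had (by rw [← h, ← mul_apply, hinv, one_apply])
  rw [mul_assoc σ (swap a c), ← swap_mul_swap_mul_swap_mul_swap ha.symm hac had hbc
    (σ.injective.ne hac) hc.symm]
  simp only [mul_assoc]

theorem switch_apply_left (hσ' : σ' = σ * swap a c * swap (σ a) (σ c)) (ha : σ a ≠ a)
    (had : a ≠ σ c) : σ' a = σ c := by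
  rw [hσ', mul_apply, mul_apply, swap_apply_of_ne_of_ne ha.symm had, swap_apply_left]

theorem switch_apply_right (hσ' : σ' = σ * swap a c * swap (σ a) (σ c)) (hinv : σ * σ = 1)
    (hc : σ c ≠ c) (had : a ≠ σ c) : σ' c = σ a := by
  have hbc : c ≠ σ a := fun h => had (by rw [h, ← mul_apply, hinv, one_apply])
  rw [hσ', mul_apply, mul_apply, swap_apply_of_ne_of_ne hbc hc.symm, swap_apply_right]

theorem numCycles_switch (hσ' : σ' = σ * swap a c * swap (σ a) (σ c)) :
    numCycles σ' = numCycles σ := by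
  have := numCycles_conj (swap (σ a) (σ c)) σ
  rwa [swap_inv, ← mul_swap_eq_swap_mul, ← hσ'] at this

variable [Finite α]

theorem numCycles_inv_mul_switch (hσ' : σ' = σ * swap a c * swap (σ a) (σ c))
    (hinv : σ * σ = 1) (hac : a ≠ c) (h₁ : (γ * σ).SameCycle a c)
    (h₂ : (γ * σ).SameCycle (σ a) (σ c)) (h₃ : ¬(γ * σ).SameCycle (σ a) a) :
    numCycles (σ'⁻¹ * γ) = numCycles (σ⁻¹ * γ) + 2 := by
  have hσσ : ∀ x, σ (σ x) = x := fun x => by rw [← mul_apply, hinv, one_apply]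
  have hπ : ∀ x y, (σ⁻¹ * γ).SameCycle x y ↔ (γ * σ).SameCycle (σ x) (σ y) := fun x y => by
    have : σ⁻¹ * γ = σ⁻¹ * (γ * σ) * σ⁻¹⁻¹ := by
      rw [inv_inv, mul_assoc, mul_assoc, hinv, mul_one]
    rw [this, sameCycle_conj, inv_inv]
  have hac' : (σ⁻¹ * γ).SameCycle a c := (hπ a c).2 h₂
  have hba : ¬(σ⁻¹ * γ).SameCycle (σ a) a := fun h =>
    h₃ (by simpa only [hπ, hσσ] using h.symm)
  -- the cycle of `σ a` under `σ⁻¹ γ` avoids `a` and `c`, so the first swap leaves it intact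
  have hbd : (swap a c * (σ⁻¹ * γ)).SameCycle (σ a) (σ c) := by
    refine ((hπ _ _).2 (by simpa only [hσσ] using h₁)).of_eqOn_cycle fun z hz => ?_
    have hz' := hz.trans (sameCycle_apply_self _ z)
    refine (swap_apply_of_ne_of_ne ?_ ?_).symm <;> rintro h <;> rw [h] at hz'
    exacts [hba hz', hba (hz'.trans hac'.symm)]
  have hσ'γ : σ'⁻¹ * γ = swap (σ a) (σ c) * (swap a c * (σ⁻¹ * γ)) := by
    rw [hσ', mul_inv_rev, mul_inv_rev, swap_inv, swap_inv, mul_assoc, mul_assoc]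
  rw [hσ'γ, numCycles_swap_mul_of_sameCycle (σ.injective.ne hac) hbd,
    numCycles_swap_mul_of_sameCycle hac hac']

theorem card_add_four_le_switch (hσ : IsNonCrossing σ γ)
    (hσ' : σ' = σ * swap a c * swap (σ a) (σ c)) (hinv : σ * σ = 1) (hac : a ≠ c)
    (h₁ : (γ * σ).SameCycle a c) (h₂ : (γ * σ).SameCycle (σ a) (σ c))
    (h₃ : ¬(γ * σ).SameCycle (σ a) a) :
    Nat.card α + 4 ≤ numCycles σ' + numCycles γ + numCycles (σ'⁻¹ * γ) := by
  rw [numCycles_switch hσ', numCycles_inv_mul_switch hσ' hinv hac h₁ h₂ h₃]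
  have := hσ.2
  omega

theorem pairJoin_sup_switch_eq_top (hσ : IsNonCrossing σ γ)
    (hσ' : σ' = σ * swap a c * swap (σ a) (σ c)) (hσ'a : σ' a = σ c) (hσ'c : σ' c = σ a) :
    (cycleSetoid γ ⊔ cycleSetoid σ').pairJoin a (σ a) = ⊤ := by
  set J := cycleSetoid γ ⊔ cycleSetoid σ'
  have hJP : J ≤ J.pairJoin a (σ a) := Setoid.le_pairJoin J a (σ a)
  have hstep : ∀ z, J z (σ' z) := fun z =>
    le_sup_right (α := Setoid α) (sameCycle_apply_self σ' z)
  have hac : J.pairJoin a (σ a) a c :=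
    Setoid.pairJoin_of_rel (Or.inl (J.refl' a)) (Or.inr (hσ'c ▸ hstep c))
  have hbd : J.pairJoin a (σ a) (σ a) (σ c) :=
    Setoid.pairJoin_of_rel (Or.inr (J.refl' _)) (Or.inl (J.symm' (hσ'a ▸ hstep a)))
  have hσJ := cycleSetoid_mul_swap_le (cycleSetoid_mul_swap_le (le_sup_right.trans hJP) hbd) hac
  rw [hσ', mul_swap_mul_self, mul_swap_mul_self] at hσJ
  exact top_le_iff.1 (hσ.1 ▸ sup_le hσJ (le_sup_left.trans hJP))

theorem sameCycle_iff_sameCycle_mul_switch (hσ' : σ' = σ * swap a c * swap (σ a) (σ c))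
    (hσ'a : σ' a = σ c) (hσ'c : σ' c = σ a) (hJ : ¬(cycleSetoid γ ⊔ cycleSetoid σ') a (σ a))
    (h₁ : (γ * σ).SameCycle a c) (h₂ : (γ * σ).SameCycle (σ a) (σ c))
    (h₃ : ¬(γ * σ).SameCycle (σ a) a) (x y : α)
    (hxy : (cycleSetoid γ ⊔ cycleSetoid σ') x a ↔ (cycleSetoid γ ⊔ cycleSetoid σ') y a) :
    (γ * σ).SameCycle x y ↔ (γ * σ').SameCycle x y := by
  set J := cycleSetoid γ ⊔ cycleSetoid σ'
  have hJσ' : J a (σ' a) := le_sup_right (α := Setoid α) (sameCycle_apply_self σ' a)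
  have hJσ'c : J c (σ' c) := le_sup_right (α := Setoid α) (sameCycle_apply_self σ' c)
  rw [hσ'a] at hJσ'
  rw [hσ'c] at hJσ'c
  refine sameCycle_iff_of_mul_swap_mul_swap (τ' := γ * σ') (p := (J · a))
    (fun z => (rel_apply_iff_of_cycleSetoid_le le_sup_left).trans
      (rel_apply_iff_of_cycleSetoid_le le_sup_right))
    (by rw [hσ']; simp only [mul_assoc]) (J.refl' a) (fun h => hJ (J.symm' h))
    (fun h => hJ (J.trans' (J.symm' h) hJσ'c)) (J.symm' hJσ') h₁ h₂
    (fun h => h₃ (h₂.trans h.symm)) hxy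

end Switch

instance (r : ℕ) (m : Fin r → ℕ) : Finite (annIndex r m) := by
  unfold annIndex; infer_instance

theorem switch_lemma_general (r : ℕ) (m : Fin r → ℕ)
    (σ : Equiv.Perm (annIndex r m))
    (hfix : ∀ x, σ x ≠ x) (hinv : σ * σ = 1)
    (hjoin : cycleSetoid σ ⊔ cycleSetoid (gammaAnn r m) = ⊤)
    (hcnt : numCycles σ + numCycles (gammaAnn r m) +
        numCycles (σ⁻¹ * gammaAnn r m) = Nat.card (annIndex r m) + 2)
    (a c : annIndex r m)
    (hac : a ≠ c) (had : a ≠ σ c)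
    (hsame₁ : (gammaAnn r m * σ).SameCycle (gammaAnn r m a) (gammaAnn r m c))
    (hsame₂ : (gammaAnn r m * σ).SameCycle a c)
    (hdistv : ¬ (gammaAnn r m * σ).SameCycle (gammaAnn r m a) a) :
    let γ := gammaAnn r m
    let σsw := σ * Equiv.swap a (σ a) * Equiv.swap c (σ c) *
      Equiv.swap a (σ c) * Equiv.swap (σ a) c
    let J := cycleSetoid γ ⊔ cycleSetoid σsw
    (Nat.card (Quotient J) = 2 ∧ J a (σ c) ∧ J (σ a) c ∧ ¬ J a (σ a)) ∧
    ∃ (hsA : ∀ x, J x a ↔ J (σsw x) a) (hgA : ∀ x, J x a ↔ J (γ x) a)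
      (hsB : ∀ x, J x (σ a) ↔ J (σsw x) (σ a))
      (hgB : ∀ x, J x (σ a) ↔ J (γ x) (σ a)),
      (cycleSetoid (σsw.subtypePerm (p := fun x => J x a) (fun x => (hsA x).symm)) ⊔ cycleSetoid (γ.subtypePerm (p := fun x => J x a) (fun x => (hgA x).symm)) = ⊤ ∧
        numCycles (σsw.subtypePerm (p := fun x => J x a) (fun x => (hsA x).symm)) + numCycles (γ.subtypePerm (p := fun x => J x a) (fun x => (hgA x).symm)) +
            numCycles ((σsw.subtypePerm (p := fun x => J x a) (fun x => (hsA x).symm))⁻¹ * γ.subtypePerm (p := fun x => J x a) (fun x => (hgA x).symm)) =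
          Nat.card {x // J x a} + 2) ∧
      (cycleSetoid (σsw.subtypePerm (p := fun x => J x (σ a)) (fun x => (hsB x).symm)) ⊔ cycleSetoid (γ.subtypePerm (p := fun x => J x (σ a)) (fun x => (hgB x).symm)) = ⊤ ∧
        numCycles (σsw.subtypePerm (p := fun x => J x (σ a)) (fun x => (hsB x).symm)) + numCycles (γ.subtypePerm (p := fun x => J x (σ a)) (fun x => (hgB x).symm)) +
            numCycles ((σsw.subtypePerm (p := fun x => J x (σ a)) (fun x => (hsB x).symm))⁻¹ * γ.subtypePerm (p := fun x => J x (σ a)) (fun x => (hgB x).symm)) =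
          Nat.card {x // J x (σ a)} + 2) ∧
      (∀ x y : {x // J x a}, (γ * σ).SameCycle x.1 y.1 ↔
        (γ.subtypePerm (p := fun x => J x a) (fun x => (hgA x).symm) * σsw.subtypePerm (p := fun x => J x a) (fun x => (hsA x).symm)).SameCycle x y) ∧
      (∀ x y : {x // J x (σ a)}, (γ * σ).SameCycle x.1 y.1 ↔
        (γ.subtypePerm (p := fun x => J x (σ a)) (fun x => (hgB x).symm) * σsw.subtypePerm (p := fun x => J x (σ a)) (fun x => (hsB x).symm)).SameCycle x y) := by
  intro γ σsw J
  have hσ : IsNonCrossing σ γ := ⟨hjoin, hcnt⟩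
  rw [sameCycle_mul_apply_left_iff hinv, sameCycle_comm, sameCycle_mul_apply_left_iff hinv,
    sameCycle_comm] at hsame₁
  rw [sameCycle_mul_apply_left_iff hinv] at hdistv
  have hsw : σsw = σ * swap a c * swap (σ a) (σ c) :=
    mul_swap_mul_swap_mul_swap_mul_swap_eq hinv (hfix a) (hfix c) hac had
  have hσ'a := switch_apply_left hsw (hfix a) had
  have hσ'c := switch_apply_right hsw hinv (hfix c) had
  have hcount := card_add_four_le_switch hσ hsw hinv hac hsame₂ hsame₁ hdistv
  have hP : J.pairJoin a (σ a) = ⊤ := pairJoin_sup_switch_eq_top hσ hsw hσ'a hσ'c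
  have hJab : ¬J a (σ a) := fun h =>
    sup_ne_top_of_card_add_four_le hcount (top_le_iff.1 (hP ▸ Setoid.pairJoin_le h))
  have hAc := Setoid.rel_iff_not_rel_of_pairJoin_eq_top hP hJab
  have hJγ : ∀ {x y}, J (γ x) y ↔ J x y := rel_apply_iff_of_cycleSetoid_le le_sup_left
  have hJσ : ∀ {x y}, J (σsw x) y ↔ J x y := rel_apply_iff_of_cycleSetoid_le le_sup_right
  have hconn : ∀ b x y, J x b → J y b → (cycleSetoid σsw ⊔ cycleSetoid γ) x y :=
    fun b x y hx hy => sup_comm (cycleSetoid γ) _ ▸ J.trans' hx (J.symm' hy)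
  obtain ⟨hncA, hncB⟩ := isNonCrossing_subtypePerm_of_card_add_four_le (fun _ => hJσ)
    (fun _ => hJγ) (fun _ => hJσ) (fun _ => hJγ) hAc (hconn a) (hconn (σ a)) hcount
  have hcyc := sameCycle_iff_sameCycle_mul_switch hsw hσ'a hσ'c hJab hsame₂ hsame₁ hdistv
  refine ⟨⟨Setoid.card_quotient_eq_two hP hJab, hσ'a ▸ hJσ.1 (J.refl' _),
    J.symm' (hσ'c ▸ hJσ.1 (J.refl' _)), hJab⟩, fun _ => hJσ.symm, fun _ => hJγ.symm,
    fun _ => hJσ.symm, fun _ => hJγ.symm, hncA, hncB, fun x y => ?_, fun x y => ?_⟩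
  · exact (hcyc x y (iff_of_true x.2 y.2)).trans sameCycle_subtypePerm_mul_iff.symm
  · exact (hcyc x y (iff_of_false ((hAc x).1 x.2) ((hAc y).1 y.2))).trans
      sameCycle_subtypePerm_mul_iff.symm

/-- The switch lemma.  Let `σ ∈ NC₂(m_1,…,m_r)` and let `(a,b)`, `(c,d)`
(`b = σ a`, `d = σ c`) be through strings of `σ` such that, in the quotient
graph of `T` by the cycles of `γσ`, the edges `e_a` and `e_c` connect the
same ordered pair of distinct vertices.  Let
`σ^switch = σ·(a,b)(c,d)(a,d)(b,c)`.  Then: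
(i) `γ ∨ σ^switch` has exactly two blocks `A` and `B`, with `{a,d} ⊆ A` and
`{b,c} ⊆ B`;
(ii) the restrictions of `σ^switch` to `A` and `B` are non-crossing pairings
relative to the restrictions of `γ`;
(iii) the cycle partition of `γσ` restricted to `A` equals that of
`γ|_A σ^switch|_A`, and similarly for `B`. -/
theorem switch_lemma (r : ℕ) (m : Fin r → ℕ)
    (σ : Equiv.Perm (annIndex r m))
    (hfix : ∀ x, σ x ≠ x) (hinv : σ * σ = 1)
    (hjoin : cycleSetoid σ ⊔ cycleSetoid (gammaAnn r m) = ⊤)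
    (hcnt : numCycles σ + numCycles (gammaAnn r m) +
        numCycles (σ⁻¹ * gammaAnn r m) = Nat.card (annIndex r m) + 2)
    (a c : annIndex r m)
    (hta : ¬ (gammaAnn r m).SameCycle a (σ a))
    (htc : ¬ (gammaAnn r m).SameCycle c (σ c))
    (hac : a ≠ c) (had : a ≠ σ c)
    (hsame₁ : (gammaAnn r m * σ).SameCycle (gammaAnn r m a) (gammaAnn r m c))
    (hsame₂ : (gammaAnn r m * σ).SameCycle a c)
    (hdistv : ¬ (gammaAnn r m * σ).SameCycle (gammaAnn r m a) a) :
    let γ := gammaAnn r m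
    let σsw := σ * Equiv.swap a (σ a) * Equiv.swap c (σ c) *
      Equiv.swap a (σ c) * Equiv.swap (σ a) c
    let J := cycleSetoid γ ⊔ cycleSetoid σsw
    (Nat.card (Quotient J) = 2 ∧ J a (σ c) ∧ J (σ a) c ∧ ¬ J a (σ a)) ∧
    ∃ (hsA : ∀ x, J x a ↔ J (σsw x) a) (hgA : ∀ x, J x a ↔ J (γ x) a)
      (hsB : ∀ x, J x (σ a) ↔ J (σsw x) (σ a))
      (hgB : ∀ x, J x (σ a) ↔ J (γ x) (σ a)),
      (cycleSetoid (σsw.subtypePerm (p := fun x => J x a) (fun x => (hsA x).symm)) ⊔ cycleSetoid (γ.subtypePerm (p := fun x => J x a) (fun x => (hgA x).symm)) = ⊤ ∧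
        numCycles (σsw.subtypePerm (p := fun x => J x a) (fun x => (hsA x).symm)) + numCycles (γ.subtypePerm (p := fun x => J x a) (fun x => (hgA x).symm)) +
            numCycles ((σsw.subtypePerm (p := fun x => J x a) (fun x => (hsA x).symm))⁻¹ * γ.subtypePerm (p := fun x => J x a) (fun x => (hgA x).symm)) =
          Nat.card {x // J x a} + 2) ∧
      (cycleSetoid (σsw.subtypePerm (p := fun x => J x (σ a)) (fun x => (hsB x).symm)) ⊔ cycleSetoid (γ.subtypePerm (p := fun x => J x (σ a)) (fun x => (hgB x).symm)) = ⊤ ∧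
        numCycles (σsw.subtypePerm (p := fun x => J x (σ a)) (fun x => (hsB x).symm)) + numCycles (γ.subtypePerm (p := fun x => J x (σ a)) (fun x => (hgB x).symm)) +
            numCycles ((σsw.subtypePerm (p := fun x => J x (σ a)) (fun x => (hsB x).symm))⁻¹ * γ.subtypePerm (p := fun x => J x (σ a)) (fun x => (hgB x).symm)) =
          Nat.card {x // J x (σ a)} + 2) ∧
      (∀ x y : {x // J x a}, (γ * σ).SameCycle x.1 y.1 ↔
        (γ.subtypePerm (p := fun x => J x a) (fun x => (hgA x).symm) * σsw.subtypePerm (p := fun x => J x a) (fun x => (hsA x).symm)).SameCycle x y) ∧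
      (∀ x y : {x // J x (σ a)}, (γ * σ).SameCycle x.1 y.1 ↔
        (γ.subtypePerm (p := fun x => J x (σ a)) (fun x => (hgB x).symm) * σsw.subtypePerm (p := fun x => J x (σ a)) (fun x => (hsB x).symm)).SameCycle x y) :=
  switch_lemma_general r m σ hfix hinv hjoin hcnt a c hac had hsame₁ hsame₂ hdistv
end
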